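/- arXiv:2303.01246 — 12 statements merged into one kernel-verified Lean document; each statement's English description precedes it below -/
import Mathlib

section
/- Every connected cubic (3-regular) graph that is not isomorphic to K₄ contains an edge that is not contained in any triangle. -/
/-!
Suppose every edge of a connected cubic graph lies in a triangle. If two neighbours `b`, `c` of
a vertex `v` were non-adjacent, the triangles on `vb` and `vc` would force the third neighbour
`a` of `v` to be adjacent to both, so `v` and `a` would have the common neighbours `b` and `c`.
The third neighbour `x` of `b` lies outside `{v, a, c}`, and the triangle on `bx` must use `v`
or `a`, whose neighbourhoods are already full. Hence every neighbourhood is a clique, and a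
connected graph with this property is complete; being cubic, it is `K₄`.
-/

namespace SimpleGraph

variable {V : Type*} {G : SimpleGraph V}

theorem Connected.eq_top_of_isClique_neighborSet (hconn : G.Connected)
    (hclique : ∀ v, G.IsClique (G.neighborSet v)) : G = ⊤ := by
  have eq_or_adj : ∀ {u w : V}, G.Walk u w → u = w ∨ G.Adj u w := by
    intro u w p
    induction p with
    | nil => exact Or.inl rfl
    | @cons u x w hux _ ih =>
      rcases ih with rfl | hxw
      · exact Or.inr hux
      · by_cases huw : u = w
        · exact Or.inl huw
        · exact Or.inr (hclique x hux.symm hxw huw)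
  ext u w
  refine ⟨Adj.ne, fun huw => ?_⟩
  obtain ⟨p⟩ := hconn.preconnected u w
  exact (eq_or_adj p).resolve_left huw

variable [Fintype V] [DecidableRel G.Adj]

theorem eq_or_eq_or_eq_of_adj_of_degree_le_three {u p q r x : V} (hdeg : G.degree u ≤ 3)
    (hp : G.Adj u p) (hq : G.Adj u q) (hr : G.Adj u r)
    (hpq : p ≠ q) (hpr : p ≠ r) (hqr : q ≠ r) (hx : G.Adj u x) :
    x = p ∨ x = q ∨ x = r := by
  classical
  by_contra! hne
  obtain ⟨hxp, hxq, hxr⟩ := hne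
  have hsub : ({x, p, q, r} : Finset V) ⊆ G.neighborFinset u := by
    intro y hy
    simp only [Finset.mem_insert, Finset.mem_singleton] at hy
    rcases hy with rfl | rfl | rfl | rfl <;> simpa
  have hcard : ({x, p, q, r} : Finset V).card = 4 := by
    simp [Finset.card_insert_of_notMem, *]
  have := Finset.card_le_card hsub
  rw [hcard, card_neighborFinset_eq_degree] at this
  omega

section EdgesInTriangles

variable (hcubic : G.IsRegularOfDegree 3)
  (htri : ∀ u v, G.Adj u v → ∃ w, G.Adj u w ∧ G.Adj v w)
include hcubic htri

theorem adj_of_adj_of_two_common_neighbors {u v b c : V} (huv : G.Adj u v)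
    (hub : G.Adj u b) (hvb : G.Adj v b) (huc : G.Adj u c) (hvc : G.Adj v c) (hbc : b ≠ c) :
    G.Adj b c := by
  classical
  by_contra hnbc
  obtain ⟨x, hbx, hxuv⟩ : ∃ x ∈ G.neighborFinset b, x ∉ ({u, v} : Finset V) := by
    refine Finset.exists_mem_notMem_of_card_lt_card ?_
    rw [card_neighborFinset_eq_degree, hcubic b]
    exact (Finset.card_le_two).trans_lt (by norm_num)
  rw [mem_neighborFinset] at hbx
  simp only [Finset.mem_insert, Finset.mem_singleton, not_or] at hxuv
  obtain ⟨hxu, hxv⟩ := hxuv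
  have hxc : x ≠ c := by rintro rfl; exact hnbc hbx
  obtain ⟨w, hbw, hxw⟩ := htri b x hbx
  rcases eq_or_eq_or_eq_of_adj_of_degree_le_three (hcubic b).le hub.symm hvb.symm hbx
      huv.ne (Ne.symm hxu) (Ne.symm hxv) hbw with rfl | rfl | rfl
  · rcases eq_or_eq_or_eq_of_adj_of_degree_le_three (hcubic w).le huv hub huc
      hvb.ne hvc.ne hbc hxw.symm with h | h | h
    exacts [hxv h, hbx.ne' h, hxc h]
  · rcases eq_or_eq_or_eq_of_adj_of_degree_le_three (hcubic w).le huv.symm hvb hvc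
      hub.ne huc.ne hbc hxw.symm with h | h | h
    exacts [hxu h, hbx.ne' h, hxc h]
  · exact hxw.ne rfl

theorem isClique_neighborSet_of_forall_adj_exists_common (v : V) :
    G.IsClique (G.neighborSet v) := by
  classical
  intro b hvb c hvc hbc
  rw [mem_neighborSet] at hvb hvc
  obtain ⟨a, hva, habc⟩ : ∃ a ∈ G.neighborFinset v, a ∉ ({b, c} : Finset V) := by
    refine Finset.exists_mem_notMem_of_card_lt_card ?_
    rw [card_neighborFinset_eq_degree, hcubic v]
    exact (Finset.card_le_two).trans_lt (by norm_num)
  rw [mem_neighborFinset] at hva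
  simp only [Finset.mem_insert, Finset.mem_singleton, not_or] at habc
  obtain ⟨hab, hac⟩ := habc
  have apex : ∀ {y z : V}, G.Adj v y → G.Adj v z → y ≠ z → a ≠ y → a ≠ z →
      G.Adj a y ∨ G.Adj y z := by
    intro y z hvy hvz hyz hay haz
    obtain ⟨w, hvw, hyw⟩ := htri v y hvy
    rcases eq_or_eq_or_eq_of_adj_of_degree_le_three (hcubic v).le hva hvy hvz
      hay haz hyz hvw with rfl | rfl | rfl
    exacts [Or.inl hyw.symm, (hyw.ne rfl).elim, Or.inr hyw]
  rcases apex hvb hvc hbc hab hac with hab' | hbc'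
  · rcases apex hvc hvb hbc.symm hac hab with hac' | hcb'
    · exact adj_of_adj_of_two_common_neighbors hcubic htri hva hvb hab' hvc hac' hbc
    · exact hcb'.symm
  · exact hbc'

end EdgesInTriangles

noncomputable def isoCompleteGraphFinFourOfEqTop (htop : G = ⊤) {v : V} (hdeg : G.degree v = 3) :
    G ≃g completeGraph (Fin 4) := by
  classical
  subst htop
  have hcard : Fintype.card V = 4 := by
    have hdeg_top : (⊤ : SimpleGraph V).degree v = Fintype.card V - 1 := by
      convert complete_graph_degree v
    have hpos := Fintype.card_pos_iff.mpr ⟨v⟩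
    omega
  exact Iso.completeGraph (Fintype.equivFinOfCardEq hcard)

end SimpleGraph

open SimpleGraph

/-- Every connected cubic (3-regular) graph that is not isomorphic to `K₄`
contains an edge that is not contained in any triangle. -/
theorem stmt0 {V : Type*} [Fintype V] (G : SimpleGraph V) [DecidableRel G.Adj]
    (hcubic : ∀ v : V, G.degree v = 3) (hconn : G.Connected)
    (hK4 : ¬ Nonempty (G ≃g (SimpleGraph.completeGraph (Fin 4)))) :
    ∃ u v : V, G.Adj u v ∧ ∀ w : V, ¬ (G.Adj u w ∧ G.Adj v w) := by
  by_contra! htri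
  have htop : G = ⊤ := hconn.eq_top_of_isClique_neighborSet
    (isClique_neighborSet_of_forall_adj_exists_common hcubic htri)
  obtain ⟨v⟩ := hconn.nonempty
  exact hK4 ⟨isoCompleteGraphFinFourOfEqTop htop (hcubic v)⟩
end

section
/- Let G = (A ∪ B, E) be a bipartite graph with |A| = |B| = 2m+1 and minimum degree at least m, where m ≥ 1. Then for every subset A₁ ⊆ A with |N(A₁)| < |A₁| (i.e., violating Hall's condition), it must hold that |A₁| = m+1 and |N(A₁)| = m, and moreover setting B₁ = N(A₁), A₂ = A \ A₁, B₂ = B \ B₁, the bipartite graph induced between A₁ and B₂ is empty and the bipartite graphs induced between A₁ and B₁ and between A₂ and B₂ are complete bipartite graphs K_{m+1,m} and K_{m,m+1} respectively. -/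
/-!
Let `N = N(A₁)`. Every vertex of `A₁` has all its neighbours in `N`, and every vertex of
`B \ N` has all its neighbours in `A \ A₁`; both sets are nonempty since `|N| < |A₁| ≤ |B|`.
The degree bounds give `m ≤ |N| < |A₁|` and `m ≤ |A \ A₁| = 2m + 1 - |A₁|`, forcing
`|A₁| = m + 1` and `|N| = m`. Now a vertex of `A₁` has at least `m = |N|` neighbours, all
in `N`, so it is joined to all of `N`; symmetrically for the vertices of `B \ N`.
-/

open Finset

section RelNeighbors

variable {α β : Type*} [Fintype β] (E : α → β → Prop) [∀ a b, Decidable (E a b)]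

def relNeighbors (s : Finset α) : Finset β :=
  univ.filter (fun b => ∃ a ∈ s, E a b)

variable {E} {s : Finset α} {a : α} {b : β}

theorem mem_relNeighbors : b ∈ relNeighbors E s ↔ ∃ a ∈ s, E a b := by
  simp [relNeighbors]

theorem mem_relNeighbors_of_adj (ha : a ∈ s) (hab : E a b) : b ∈ relNeighbors E s :=
  mem_relNeighbors.2 ⟨a, ha, hab⟩

theorem filter_adj_subset_relNeighbors (ha : a ∈ s) :
    univ.filter (fun b => E a b) ⊆ relNeighbors E s := fun _ hb =>
  mem_relNeighbors_of_adj ha (mem_filter.1 hb).2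

theorem adj_of_card_relNeighbors_le (ha : a ∈ s)
    (hdeg : (relNeighbors E s).card ≤ (univ.filter (fun b => E a b)).card)
    (hb : b ∈ relNeighbors E s) : E a b := by
  rw [← eq_of_subset_of_card_le (filter_adj_subset_relNeighbors ha) hdeg] at hb
  exact (mem_filter.1 hb).2

variable [Fintype α] [DecidableEq α]

theorem filter_adj_subset_compl_of_notMem_relNeighbors (hb : b ∉ relNeighbors E s) :
    univ.filter (fun a => E a b) ⊆ sᶜ := fun _ ha =>
  mem_compl.2 fun has => hb (mem_relNeighbors_of_adj has (mem_filter.1 ha).2)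

theorem adj_of_card_compl_le (hb : b ∉ relNeighbors E s)
    (hdeg : sᶜ.card ≤ (univ.filter (fun a => E a b)).card) (ha : a ∉ s) : E a b := by
  rw [← mem_compl, ← eq_of_subset_of_card_le
    (filter_adj_subset_compl_of_notMem_relNeighbors hb) hdeg] at ha
  exact (mem_filter.1 ha).2

theorem card_eq_of_card_relNeighbors_lt (m : ℕ)
    (hA : Fintype.card α = 2 * m + 1) (hB : Fintype.card β = 2 * m + 1)
    (hdegA : ∀ a : α, m ≤ (univ.filter (fun b => E a b)).card)
    (hdegB : ∀ b : β, m ≤ (univ.filter (fun a => E a b)).card)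
    (hviol : (relNeighbors E s).card < s.card) :
    s.card = m + 1 ∧ (relNeighbors E s).card = m := by
  obtain ⟨a, ha⟩ : s.Nonempty := card_pos.1 (by omega)
  have hs : s.card ≤ Fintype.card α := card_le_univ s
  obtain ⟨b, -, hb⟩ : ∃ b ∈ univ, b ∉ relNeighbors E s :=
    exists_mem_notMem_of_card_lt_card (by rw [card_univ]; omega)
  have hN : m ≤ (relNeighbors E s).card :=
    (hdegA a).trans (card_le_card (filter_adj_subset_relNeighbors ha))
  have hsc : m ≤ sᶜ.card :=
    (hdegB b).trans (card_le_card (filter_adj_subset_compl_of_notMem_relNeighbors hb))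
  rw [card_compl] at hsc
  omega

end RelNeighbors

theorem stmt1_general {α β : Type*} [Fintype α] [Fintype β]
    (m : ℕ) (E : α → β → Prop) [∀ a b, Decidable (E a b)]
    (hA : Fintype.card α = 2 * m + 1) (hB : Fintype.card β = 2 * m + 1)
    (hdegA : ∀ a : α, m ≤ (univ.filter (fun b => E a b)).card)
    (hdegB : ∀ b : β, m ≤ (univ.filter (fun a => E a b)).card)
    (A₁ : Finset α)
    (hviol : (univ.filter (fun b => ∃ a ∈ A₁, E a b)).card < A₁.card) :
    A₁.card = m + 1 ∧
    (univ.filter (fun b => ∃ a ∈ A₁, E a b)).card = m ∧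
    (∀ a ∈ A₁, ∀ b ∉ univ.filter (fun b => ∃ a ∈ A₁, E a b), ¬ E a b) ∧
    (∀ a ∈ A₁, ∀ b ∈ univ.filter (fun b => ∃ a ∈ A₁, E a b), E a b) ∧
    (∀ a ∉ A₁, ∀ b ∉ univ.filter (fun b => ∃ a ∈ A₁, E a b), E a b) := by
  classical
  change (relNeighbors E A₁).card < A₁.card at hviol
  change A₁.card = m + 1 ∧ (relNeighbors E A₁).card = m ∧
    (∀ a ∈ A₁, ∀ b ∉ relNeighbors E A₁, ¬ E a b) ∧
    (∀ a ∈ A₁, ∀ b ∈ relNeighbors E A₁, E a b) ∧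
    (∀ a ∉ A₁, ∀ b ∉ relNeighbors E A₁, E a b)
  obtain ⟨hs, hN⟩ := card_eq_of_card_relNeighbors_lt m hA hB hdegA hdegB hviol
  refine ⟨hs, hN, fun a ha b hb hab => hb (mem_relNeighbors_of_adj ha hab), ?_, ?_⟩
  · exact fun a ha b => adj_of_card_relNeighbors_le ha (hN ▸ hdegA a)
  · exact fun a ha b hb => adj_of_card_compl_le hb (by rw [card_compl]; have := hdegB b; omega) ha

/-- Lemma on near-violations of Hall's condition in a bipartite graph with parts
of size `2m+1` and minimum degree `m`: any violating set `A₁` has `|A₁| = m+1`,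
`|N(A₁)| = m`, the graph between `A₁` and `B₂ = B \ N(A₁)` is empty, and the
graphs between `A₁, N(A₁)` and between `A \ A₁, B₂` are complete bipartite. -/
theorem stmt1 {α β : Type*} [Fintype α] [Fintype β] [DecidableEq α] [DecidableEq β]
    (m : ℕ) (hm : 1 ≤ m) (E : α → β → Prop) [∀ a b, Decidable (E a b)]
    (hA : Fintype.card α = 2 * m + 1) (hB : Fintype.card β = 2 * m + 1)
    (hdegA : ∀ a : α, m ≤ (univ.filter (fun b => E a b)).card)
    (hdegB : ∀ b : β, m ≤ (univ.filter (fun a => E a b)).card)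
    (A₁ : Finset α)
    (hviol : (univ.filter (fun b => ∃ a ∈ A₁, E a b)).card < A₁.card) :
    A₁.card = m + 1 ∧
    (univ.filter (fun b => ∃ a ∈ A₁, E a b)).card = m ∧
    (∀ a ∈ A₁, ∀ b ∉ univ.filter (fun b => ∃ a ∈ A₁, E a b), ¬ E a b) ∧
    (∀ a ∈ A₁, ∀ b ∈ univ.filter (fun b => ∃ a ∈ A₁, E a b), E a b) ∧
    (∀ a ∉ A₁, ∀ b ∉ univ.filter (fun b => ∃ a ∈ A₁, E a b), E a b) :=
  stmt1_general m E hA hB hdegA hdegB A₁ hviol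
end

section
/- Let G = (A ∪ B, E) be a bipartite graph with |A| = |B| = 2m and minimum degree at least m−1, for some m ≥ 2. If A₁ ⊆ A satisfies |N(A₁)| < |A₁| then (|A₁|, |N(A₁)|) is one of (m, m−1), (m+1, m−1), or (m+1, m). In each case, letting B₁ = N(A₁), A₂ = A \ A₁, B₂ = B \ B₁, the bipartite graph induced between A₁ and B₂ is empty. -/
/-!
A violator `A₁` has a neighbour of degree at least `m - 1` inside `N(A₁)`, so `|N(A₁)| ≥ m - 1`.
Since `|N(A₁)| < |A₁| ≤ |B|`, some `b ∈ B` lies outside `N(A₁)`; all of its at least `m - 1`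
neighbours lie in `A \ A₁`, so `|A₁| ≤ m + 1`. The three cases are what remains of
`m - 1 ≤ |N(A₁)| < |A₁| ≤ m + 1`.
-/

open Finset

namespace BipartiteRel

variable {α β : Type*} [Fintype β] (E : α → β → Prop) [∀ a b, Decidable (E a b)]

def neighbors (s : Finset α) : Finset β :=
  univ.filter fun b => ∃ a ∈ s, E a b

variable {E}

theorem not_rel_of_notMem_neighbors {s : Finset α} {a : α} (ha : a ∈ s) {b : β}
    (hb : b ∉ neighbors E s) : ¬ E a b :=
  fun h => hb (mem_filter.2 ⟨mem_univ b, a, ha, h⟩)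

theorem card_filter_rel_le_card_neighbors {s : Finset α} {a : α} (ha : a ∈ s) :
    (univ.filter (E a ·)).card ≤ (neighbors E s).card :=
  card_le_card fun b hb => mem_filter.2 ⟨mem_univ b, a, ha, (mem_filter.1 hb).2⟩

theorem card_add_card_filter_rel_le_of_notMem_neighbors [Fintype α] {s : Finset α} {b : β}
    (hb : b ∉ neighbors E s) : s.card + (univ.filter (E · b)).card ≤ Fintype.card α := by
  classical
  have hdisj : Disjoint s (univ.filter (E · b)) :=
    disjoint_left.2 fun _ ha h => not_rel_of_notMem_neighbors ha hb (mem_filter.1 h).2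
  rw [← card_union_of_disjoint hdisj]
  exact card_le_univ _

theorem exists_notMem_neighbors_of_card_neighbors_lt [Fintype α] {s : Finset α}
    (hcard : Fintype.card α ≤ Fintype.card β) (hviol : (neighbors E s).card < s.card) :
    ∃ b, b ∉ neighbors E s := by
  have hlt : (neighbors E s).card < Fintype.card β :=
    hviol.trans_le ((card_le_univ s).trans hcard)
  simpa [eq_univ_iff_forall] using (card_lt_iff_ne_univ _).1 hlt

theorem card_bounds_of_card_neighbors_lt [Fintype α] {s : Finset α} {dA dB : ℕ}
    (hdegA : ∀ a, dA ≤ (univ.filter (E a ·)).card) (hdegB : ∀ b, dB ≤ (univ.filter (E · b)).card)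
    (hcard : Fintype.card α ≤ Fintype.card β) (hviol : (neighbors E s).card < s.card) :
    dA ≤ (neighbors E s).card ∧ s.card + dB ≤ Fintype.card α := by
  obtain ⟨a, ha⟩ : s.Nonempty := card_pos.1 (Nat.zero_lt_of_lt hviol)
  obtain ⟨b, hb⟩ := exists_notMem_neighbors_of_card_neighbors_lt hcard hviol
  exact ⟨(hdegA a).trans (card_filter_rel_le_card_neighbors ha),
    (Nat.add_le_add_left (hdegB b) _).trans (card_add_card_filter_rel_le_of_notMem_neighbors hb)⟩

end BipartiteRel

open BipartiteRel in
theorem stmt2_general {α β : Type*} [Fintype α] [Fintype β]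
    (m : ℕ) (E : α → β → Prop) [∀ a b, Decidable (E a b)]
    (hA : Fintype.card α = 2 * m) (hB : Fintype.card β = 2 * m)
    (hdegA : ∀ a : α, m - 1 ≤ (univ.filter (fun b => E a b)).card)
    (hdegB : ∀ b : β, m - 1 ≤ (univ.filter (fun a => E a b)).card)
    (A₁ : Finset α)
    (hviol : (univ.filter (fun b => ∃ a ∈ A₁, E a b)).card < A₁.card) :
    ((A₁.card = m ∧ (univ.filter (fun b => ∃ a ∈ A₁, E a b)).card = m - 1) ∨
     (A₁.card = m + 1 ∧ (univ.filter (fun b => ∃ a ∈ A₁, E a b)).card = m - 1) ∨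
     (A₁.card = m + 1 ∧ (univ.filter (fun b => ∃ a ∈ A₁, E a b)).card = m)) ∧
    (∀ a ∈ A₁, ∀ b ∉ univ.filter (fun b => ∃ a ∈ A₁, E a b), ¬ E a b) := by
  obtain ⟨hN, hA₁⟩ : m - 1 ≤ (neighbors E A₁).card ∧ A₁.card + (m - 1) ≤ Fintype.card α :=
    card_bounds_of_card_neighbors_lt hdegA hdegB (hA.trans hB.symm).le hviol
  unfold neighbors at hN
  exact ⟨by omega, fun a ha b hb => not_rel_of_notMem_neighbors ha hb⟩

/-- Lemma on Hall-condition violations in a bipartite graph with parts of size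
`2m` and minimum degree `m-1`: any violating set `A₁` has
`(|A₁|, |N(A₁)|) ∈ {(m, m-1), (m+1, m-1), (m+1, m)}`, and the graph between
`A₁` and `B \ N(A₁)` is empty. -/
theorem stmt2 {α β : Type*} [Fintype α] [Fintype β] [DecidableEq α] [DecidableEq β]
    (m : ℕ) (hm : 2 ≤ m) (E : α → β → Prop) [∀ a b, Decidable (E a b)]
    (hA : Fintype.card α = 2 * m) (hB : Fintype.card β = 2 * m)
    (hdegA : ∀ a : α, m - 1 ≤ (univ.filter (fun b => E a b)).card)
    (hdegB : ∀ b : β, m - 1 ≤ (univ.filter (fun a => E a b)).card)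
    (A₁ : Finset α)
    (hviol : (univ.filter (fun b => ∃ a ∈ A₁, E a b)).card < A₁.card) :
    ((A₁.card = m ∧ (univ.filter (fun b => ∃ a ∈ A₁, E a b)).card = m - 1) ∨
     (A₁.card = m + 1 ∧ (univ.filter (fun b => ∃ a ∈ A₁, E a b)).card = m - 1) ∨
     (A₁.card = m + 1 ∧ (univ.filter (fun b => ∃ a ∈ A₁, E a b)).card = m)) ∧
    (∀ a ∈ A₁, ∀ b ∉ univ.filter (fun b => ∃ a ∈ A₁, E a b), ¬ E a b) :=
  stmt2_general m E hA hB hdegA hdegB A₁ hviol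
end

section
/- Let m ≥ 3 and let G = (A ∪ B, E) be a bipartite graph with |A| = |B| = 2m and minimum degree at least m. Suppose there are partitions A = A₁ ∪ A₂ and B = B₁ ∪ B₂ with |A₁| = m, |B₁| = m−1, such that the induced bipartite graph between A₁ and B₁ is complete (isomorphic to K_{m,m−1}), and the induced bipartite graph between A₁ and B₂ is a matching of size m together with one isolated vertex of B₂. Then for any matching M in G containing at most m−2 edges between A₁ and B₂, the graph G − M satisfies Hall's condition for B (i.e., |N_{G−M}(B')| ≥ |B'| for every B' ⊆ B), and hence G − M has a perfect matching. -/
open Finset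

/-!
In `G - M` every vertex has degree at least `m - 1`. This gives Hall's condition for `|B'| < m`
(a single vertex of `B'` has `m - 1` neighbours) and for `|B'| ≥ m + 2` (a vertex of `A` has
`m - 1` neighbours but only `m - 2` vertices lie outside `B'`). For `|B'| ∈ {m, m + 1}` count the
neighbours in `A₁` and in `A₂ = A \ A₁` separately. Two vertices of `B' ∩ B₁` already see all of
`A₁`, since `M` removes at most one of the two edges; one vertex sees all but one. Each vertex of
`B₂ = B \ B₁` has at most one neighbour in `A₁`, hence misses at most one vertex of `A₂`, and
three such vertices leave at most one vertex of `A₂` unreached. Finally `f` maps `A₁` onto all but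
one vertex of `B₂`, so `B' ∩ B₂` contains `f a` for at least `|B' ∩ B₂| - 1` vertices `a ∈ A₁`,
and `M` blocks at most `m - 2` of the edges `a f(a)`.
-/

namespace MatchingRemoval

variable {α β : Type*}

def IsMatching (M : Finset (α × β)) : Prop :=
  ∀ p ∈ M, ∀ q ∈ M, p ≠ q → p.1 ≠ q.1 ∧ p.2 ≠ q.2

namespace IsMatching

variable {M : Finset (α × β)}

theorem fst_eq (hM : IsMatching M) {a a' : α} {b : β} (h : (a, b) ∈ M) (h' : (a', b) ∈ M) :
    a = a' := by
  by_contra hne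
  exact (hM _ h _ h' (by simp [hne])).2 rfl

theorem snd_eq (hM : IsMatching M) {a : α} {b b' : β} (h : (a, b) ∈ M) (h' : (a, b') ∈ M) :
    b = b' := by
  by_contra hne
  exact (hM _ h _ h' (by simp [hne])).1 rfl

theorem card_filter_fst_le_one [DecidableEq α] [DecidableEq β] (hM : IsMatching M)
    (s : Finset α) (b : β) : #{a ∈ s | (a, b) ∈ M} ≤ 1 :=
  card_le_one.mpr fun _ ha _ ha' => hM.fst_eq (mem_filter.mp ha).2 (mem_filter.mp ha').2

theorem card_filter_snd_le_one [DecidableEq α] [DecidableEq β] (hM : IsMatching M)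
    (a : α) (s : Finset β) : #{b ∈ s | (a, b) ∈ M} ≤ 1 :=
  card_le_one.mpr fun _ hb _ hb' => hM.snd_eq (mem_filter.mp hb).2 (mem_filter.mp hb').2

end IsMatching

section Neighbourhood

variable [Fintype α] [DecidableEq α] [DecidableEq β] (E : α → β → Prop) [∀ a b, Decidable (E a b)]
  {M : Finset (α × β)} {s : Finset β}

variable (M) in
/-- The neighbourhood `N_{G - M}(s)` of `s ⊆ B`, where `E` is the adjacency of `G`. -/
def nbhd (s : Finset β) : Finset α :=
  univ.filter fun a => ∃ b ∈ s, E a b ∧ (a, b) ∉ M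

variable {E}

theorem mem_nbhd_of_adj_of_adj (hM : IsMatching M) {a : α} {c₁ c₂ : β} (hc₁ : c₁ ∈ s)
    (hc₂ : c₂ ∈ s) (hne : c₁ ≠ c₂) (h₁ : E a c₁) (h₂ : E a c₂) : a ∈ nbhd E M s := by
  simp only [nbhd, mem_filter, mem_univ, true_and]
  by_cases h : (a, c₁) ∈ M
  · exact ⟨c₂, hc₂, h₂, fun h' => hne (hM.snd_eq h h')⟩
  · exact ⟨c₁, hc₁, h₁, h⟩

theorem card_filter_adj_le_card_nbhd_inter_add_one (hM : IsMatching M) (X : Finset α) {c : β}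
    (hc : c ∈ s) : #{a ∈ X | E a c} ≤ #(nbhd E M s ∩ X) + 1 := by
  have hsub : {a ∈ X | E a c} ⊆ (nbhd E M s ∩ X) ∪ {a ∈ X | (a, c) ∈ M} := by
    intro a ha
    rw [mem_filter] at ha
    by_cases h : (a, c) ∈ M
    · exact mem_union_right _ (mem_filter.mpr ⟨ha.1, h⟩)
    · exact mem_union_left _ (mem_inter.mpr
        ⟨mem_filter.mpr ⟨mem_univ a, c, hc, ha.2, h⟩, ha.1⟩)
  calc #{a ∈ X | E a c} ≤ #(nbhd E M s ∩ X) + #{a ∈ X | (a, c) ∈ M} :=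
        (card_le_card hsub).trans (card_union_le _ _)
    _ ≤ #(nbhd E M s ∩ X) + 1 := by grw [hM.card_filter_fst_le_one]

theorem le_card_nbhd_add_one (hM : IsMatching M) {d : ℕ} (hdeg : ∀ b, d ≤ #{a | E a b})
    (hs : s.Nonempty) : d ≤ #(nbhd E M s) + 1 := by
  obtain ⟨c, hc⟩ := hs
  simpa using (hdeg c).trans (card_filter_adj_le_card_nbhd_inter_add_one hM univ hc)

theorem nbhd_eq_univ_of_card_lt [Fintype β] (hM : IsMatching M) {d : ℕ}
    (hdeg : ∀ a, d ≤ #{b | E a b}) (hs : Fintype.card β + 1 < #s + d) : nbhd E M s = univ := by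
  refine eq_univ_of_forall fun a => ?_
  by_contra ha
  have hsub : ({b | E a b} : Finset β) ⊆ sᶜ ∪ {b ∈ s | (a, b) ∈ M} := by
    intro b hb
    by_cases hbs : b ∈ s
    · refine mem_union_right _ (mem_filter.mpr ⟨hbs, ?_⟩)
      by_contra h
      exact ha (mem_filter.mpr ⟨mem_univ a, b, hbs, (mem_filter.mp hb).2, h⟩)
    · exact mem_union_left _ (mem_compl.mpr hbs)
  have hdeg' := (hdeg a).trans ((card_le_card hsub).trans (card_union_le _ _))
  rw [card_compl] at hdeg'
  have := hM.card_filter_snd_le_one a s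
  have := card_le_univ s
  omega

/-- If every vertex of `Y` misses at most one vertex of `X`, two vertices of `X` outside the
neighbourhood would have to be `M`-matched between them to all of `Y`. -/
theorem card_le_card_nbhd_inter_add_one (hM : IsMatching M) {X : Finset α} {Y : Finset β}
    (hYs : Y ⊆ s) (hY : 2 < #Y) (hX : ∀ b ∈ Y, #X ≤ #{a ∈ X | E a b} + 1) :
    #X ≤ #(nbhd E M s ∩ X) + 1 := by
  have hmatched : ∀ a ∈ X \ nbhd E M s, ∀ b ∈ Y, E a b → (a, b) ∈ M := by
    intro a ha b hb hab
    by_contra h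
    exact (mem_sdiff.mp ha).2 (mem_filter.mpr ⟨mem_univ a, b, hYs hb, hab, h⟩)
  have hmissed : #(X \ nbhd E M s) ≤ 1 := by
    refine card_le_one.mpr fun a₁ h₁ a₂ h₂ => ?_
    by_contra hne
    have hcover : Y ⊆ {b ∈ Y | (a₁, b) ∈ M} ∪ {b ∈ Y | (a₂, b) ∈ M} := by
      intro b hb
      have hadj : E a₁ b ∨ E a₂ b := by
        by_contra! h
        have hnonadj : #{a ∈ X | ¬E a b} ≤ 1 := by
          have := card_filter_add_card_filter_not (s := X) (E · b)
          have := hX b hb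
          omega
        refine hne (card_le_one.mp hnonadj a₁ ?_ a₂ ?_)
        · exact mem_filter.mpr ⟨(mem_sdiff.mp h₁).1, h.1⟩
        · exact mem_filter.mpr ⟨(mem_sdiff.mp h₂).1, h.2⟩
      rcases hadj with h | h
      · exact mem_union_left _ (mem_filter.mpr ⟨hb, hmatched a₁ h₁ b hb h⟩)
      · exact mem_union_right _ (mem_filter.mpr ⟨hb, hmatched a₂ h₂ b hb h⟩)
    have := (card_le_card hcover).trans (card_union_le _ _)
    have := hM.card_filter_snd_le_one a₁ Y
    have := hM.card_filter_snd_le_one a₂ Y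
    omega
  have := card_sdiff_add_card_inter X (nbhd E M s)
  rw [inter_comm] at this
  omega

theorem card_filter_mem_le_card_nbhd_inter_add (A : Finset α) (B : Finset β) {f : α → β}
    (hadj : ∀ a ∈ A, E a (f a)) (hmaps : ∀ a ∈ A, f a ∉ B) :
    #{a ∈ A | f a ∈ s} ≤ #(nbhd E M s ∩ A) + #{p ∈ M | p.1 ∈ A ∧ p.2 ∉ B} := by
  have hsub : {a ∈ A | f a ∈ s} ⊆ (nbhd E M s ∩ A) ∪ {a ∈ A | (a, f a) ∈ M} := by
    intro a ha
    rw [mem_filter] at ha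
    by_cases h : (a, f a) ∈ M
    · exact mem_union_right _ (mem_filter.mpr ⟨ha.1, h⟩)
    · exact mem_union_left _ (mem_inter.mpr
        ⟨mem_filter.mpr ⟨mem_univ a, f a, ha.2, hadj a ha.1, h⟩, ha.1⟩)
  have hmatched : #{a ∈ A | (a, f a) ∈ M} ≤ #{p ∈ M | p.1 ∈ A ∧ p.2 ∉ B} := by
    refine card_le_card_of_injOn (fun a => (a, f a)) (fun a ha => ?_) fun a _ a' _ h => ?_
    · rw [mem_coe, mem_filter] at ha ⊢
      exact ⟨ha.2, ha.1, hmaps a ha.1⟩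
    · exact (Prod.mk.inj h).1
  grw [card_le_card hsub, card_union_le, hmatched]

end Neighbourhood

theorem card_inter_le_card_filter_mem_add_one {f : α → β} {A : Finset α} {T : Finset β}
    [DecidableEq β] (hmaps : ∀ a ∈ A, f a ∈ T) (hinj : Set.InjOn f A) (hT : #T = #A + 1)
    (s : Finset β) : #(s ∩ T) ≤ #{a ∈ A | f a ∈ s} + 1 := by
  have hmiss : #{a ∈ A | f a ∉ s} ≤ #(T \ s) := by
    refine card_le_card_of_injOn f (fun a ha => ?_)
      (hinj.mono (coe_subset.mpr (filter_subset _ _)))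
    rw [mem_coe, mem_filter] at ha
    exact mem_sdiff.mpr ⟨hmaps a ha.1, ha.2⟩
  have hA := card_filter_add_card_filter_not (s := A) (fun a => f a ∈ s)
  have hT' := card_inter_add_card_sdiff T s
  rw [inter_comm]
  omega

section Configuration

variable {E : α → β → Prop} [∀ a b, Decidable (E a b)] {A₁ : Finset α} {B₁ : Finset β}

theorem card_filter_adj_le_one_of_injOn {f : α → β} (hf_inj : Set.InjOn f A₁)
    (hf_match : ∀ a ∈ A₁, ∀ b ∉ B₁, (E a b ↔ b = f a)) {b : β} (hb : b ∉ B₁) :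
    #{a ∈ A₁ | E a b} ≤ 1 := by
  refine card_le_one.mpr fun a ha a' ha' => ?_
  rw [mem_filter] at ha ha'
  exact hf_inj ha.1 ha'.1 (((hf_match a ha.1 b hb).mp ha.2).symm.trans
    ((hf_match a' ha'.1 b hb).mp ha'.2))

theorem le_card_filter_compl_adj_add_one [Fintype α] [DecidableEq α] {m : ℕ} {b : β}
    (hdeg : m ≤ #{a | E a b}) (hA₁ : #{a ∈ A₁ | E a b} ≤ 1) : m ≤ #{a ∈ A₁ᶜ | E a b} + 1 := by
  have hsub : ({a | E a b} : Finset α) ⊆ {a ∈ A₁ | E a b} ∪ {a ∈ A₁ᶜ | E a b} := by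
    intro a ha
    rw [mem_filter] at ha
    by_cases h : a ∈ A₁
    · exact mem_union_left _ (mem_filter.mpr ⟨h, ha.2⟩)
    · exact mem_union_right _ (mem_filter.mpr ⟨mem_compl.mpr h, ha.2⟩)
  have := (card_le_card hsub).trans (card_union_le _ _)
  omega

theorem card_le_card_nbhd_of_le_card_of_card_le [Fintype α] [Fintype β] [DecidableEq α]
    [DecidableEq β] {m : ℕ} (hm : 3 ≤ m) (hA : Fintype.card α = 2 * m)
    (hB : Fintype.card β = 2 * m) (hdegB : ∀ b, m ≤ #{a | E a b}) (hA₁ : #A₁ = m)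
    (hB₁ : #B₁ = m - 1) (hcomplete : ∀ a ∈ A₁, ∀ b ∈ B₁, E a b) {f : α → β}
    (hf_maps : ∀ a ∈ A₁, f a ∉ B₁) (hf_inj : Set.InjOn f A₁)
    (hf_match : ∀ a ∈ A₁, ∀ b ∉ B₁, (E a b ↔ b = f a)) {M : Finset (α × β)}
    (hM : IsMatching M) (hMsize : #{p ∈ M | p.1 ∈ A₁ ∧ p.2 ∉ B₁} ≤ m - 2) {s : Finset β}
    (hs : m ≤ #s) (hs' : #s ≤ m + 1) : #s ≤ #(nbhd E M s) := by
  have hA₂ : #A₁ᶜ = m := by rw [card_compl, hA, hA₁]; omega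
  have hdeg₂ : ∀ b ∉ B₁, m ≤ #{a ∈ A₁ᶜ | E a b} + 1 := fun b hb =>
    le_card_filter_compl_adj_add_one (hdegB b)
      (card_filter_adj_le_one_of_injOn hf_inj hf_match hb)
  have hN_split : #(nbhd E M s ∩ A₁) + #(nbhd E M s ∩ A₁ᶜ) = #(nbhd E M s) := by
    rw [← sdiff_eq_inter_compl]; exact card_inter_add_card_sdiff _ _
  have hs_split : #(s ∩ B₁) + #(s ∩ B₁ᶜ) = #s := by
    rw [← sdiff_eq_inter_compl]; exact card_inter_add_card_sdiff _ _
  have hs₁ : #(s ∩ B₁) ≤ m - 1 := hB₁ ▸ card_le_card inter_subset_right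
  have hreach₂ : m ≤ #(nbhd E M s ∩ A₁ᶜ) + 2 := by
    obtain ⟨b, hb⟩ : (s ∩ B₁ᶜ).Nonempty := card_pos.mp (by omega)
    rw [mem_inter, mem_compl] at hb
    have := card_filter_adj_le_card_nbhd_inter_add_one (E := E) hM A₁ᶜ hb.1
    have := hdeg₂ b hb.2
    omega
  have hreach₂_of_three : 3 ≤ #(s ∩ B₁ᶜ) → m ≤ #(nbhd E M s ∩ A₁ᶜ) + 1 := fun hk => hA₂ ▸
    card_le_card_nbhd_inter_add_one hM inter_subset_left hk fun b hb =>
      hA₂ ▸ hdeg₂ b (mem_compl.mp (mem_inter.mp hb).2)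
  have hreach₁_of_two : 2 ≤ #(s ∩ B₁) → #(nbhd E M s ∩ A₁) = m := by
    intro ht2
    obtain ⟨c₁, hc₁, c₂, hc₂, hne⟩ := one_lt_card.mp ht2
    rw [mem_inter] at hc₁ hc₂
    rw [inter_eq_right.mpr fun a ha => mem_nbhd_of_adj_of_adj hM hc₁.1 hc₂.1 hne
      (hcomplete a ha c₁ hc₁.2) (hcomplete a ha c₂ hc₂.2), hA₁]
  have hreach₁_of_one : 1 ≤ #(s ∩ B₁) → m ≤ #(nbhd E M s ∩ A₁) + 1 := by
    intro ht1
    obtain ⟨c, hc⟩ := card_pos.mp ht1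
    rw [mem_inter] at hc
    have := card_filter_adj_le_card_nbhd_inter_add_one (E := E) hM A₁ hc.1
    rwa [filter_true_of_mem fun a ha => hcomplete a ha c hc.2, hA₁] at this
  have hreach₁_via_f : #(s ∩ B₁ᶜ) ≤ #(nbhd E M s ∩ A₁) + (m - 2) + 1 := by
    have hB₂ : #B₁ᶜ = #A₁ + 1 := by rw [card_compl, hB, hB₁, hA₁]; omega
    have := card_inter_le_card_filter_mem_add_one (fun a ha => mem_compl.mpr (hf_maps a ha))
      hf_inj hB₂ s
    have := card_filter_mem_le_card_nbhd_inter_add (M := M) (s := s) A₁ B₁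
      (fun a ha => (hf_match a ha _ (hf_maps a ha)).mpr rfl) hf_maps
    omega
  omega

end Configuration

end MatchingRemoval

open MatchingRemoval in
theorem stmt3_general {α β : Type*} [Fintype α] [Fintype β] [DecidableEq α] [DecidableEq β]
    (m : ℕ) (hm : 3 ≤ m) (E : α → β → Prop) [∀ a b, Decidable (E a b)]
    (hA : Fintype.card α = 2 * m) (hB : Fintype.card β = 2 * m)
    (hdegA : ∀ a : α, m ≤ (univ.filter (fun b => E a b)).card)
    (hdegB : ∀ b : β, m ≤ (univ.filter (fun a => E a b)).card)
    (A₁ : Finset α) (B₁ : Finset β)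
    (hA₁ : A₁.card = m) (hB₁ : B₁.card = m - 1)
    (hcomplete : ∀ a ∈ A₁, ∀ b ∈ B₁, E a b)
    -- the edges between `A₁` and `B₂ = B \ B₁` form a matching `a ↦ f a` of size `m`
    (f : α → β) (hf_maps : ∀ a ∈ A₁, f a ∉ B₁) (hf_inj : Set.InjOn f ↑A₁)
    (hf_match : ∀ a ∈ A₁, ∀ b ∉ B₁, (E a b ↔ b = f a))
    (M : Finset (α × β))
    (hMdisj : ∀ p ∈ M, ∀ q ∈ M, p ≠ q → p.1 ≠ q.1 ∧ p.2 ≠ q.2)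
    (hMsize : (M.filter (fun p => p.1 ∈ A₁ ∧ p.2 ∉ B₁)).card ≤ m - 2) :
    (∀ B' : Finset β,
        B'.card ≤ (univ.filter (fun a => ∃ b ∈ B', E a b ∧ (a, b) ∉ M)).card) ∧
    ∃ g : β → α, Function.Bijective g ∧ ∀ b : β, E (g b) b ∧ (g b, b) ∉ M := by
  have hM : IsMatching M := hMdisj
  have hall : ∀ s : Finset β, #s ≤ #(nbhd E M s) := by
    intro s
    rcases s.eq_empty_or_nonempty with rfl | hne
    · simp
    by_cases hsmall : #s < m
    · have := le_card_nbhd_add_one hM hdegB hne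
      omega
    by_cases hlarge : m + 2 ≤ #s
    · rw [nbhd_eq_univ_of_card_lt hM hdegA (by omega), card_univ, hA, ← hB]
      exact card_le_univ s
    exact card_le_card_nbhd_of_le_card_of_card_le hm hA hB hdegB hA₁ hB₁ hcomplete hf_maps
      hf_inj hf_match hM hMsize (by omega) (by omega)
  obtain ⟨g, hg_inj, hg⟩ := (Fintype.all_card_le_filter_rel_iff_exists_injective _).mp hall
  exact ⟨hall, g, (Fintype.bijective_iff_injective_and_card g).mpr ⟨hg_inj, by rw [hA, hB]⟩, hg⟩

/-- Bipartite graph with parts of size `2m` (`m ≥ 3`) and minimum degree `m`,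
with `G[A₁,B₁] ≅ K_{m,m-1}` complete and `G[A₁,B₂]` a matching of size `m`
plus an isolated vertex of `B₂`. Removing any matching `M` with at most `m-2`
edges between `A₁` and `B₂` leaves a graph satisfying Hall's condition for `B`,
and hence having a perfect matching. -/
theorem stmt3 {α β : Type*} [Fintype α] [Fintype β] [DecidableEq α] [DecidableEq β]
    (m : ℕ) (hm : 3 ≤ m) (E : α → β → Prop) [∀ a b, Decidable (E a b)]
    (hA : Fintype.card α = 2 * m) (hB : Fintype.card β = 2 * m)
    (hdegA : ∀ a : α, m ≤ (univ.filter (fun b => E a b)).card)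
    (hdegB : ∀ b : β, m ≤ (univ.filter (fun a => E a b)).card)
    (A₁ : Finset α) (B₁ : Finset β)
    (hA₁ : A₁.card = m) (hB₁ : B₁.card = m - 1)
    (hcomplete : ∀ a ∈ A₁, ∀ b ∈ B₁, E a b)
    -- the edges between `A₁` and `B₂ = B \ B₁` form a matching `a ↦ f a` of size `m`
    (f : α → β) (hf_maps : ∀ a ∈ A₁, f a ∉ B₁) (hf_inj : Set.InjOn f ↑A₁)
    (hf_match : ∀ a ∈ A₁, ∀ b ∉ B₁, (E a b ↔ b = f a))
    (M : Finset (α × β)) (hME : ∀ p ∈ M, E p.1 p.2)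
    (hMdisj : ∀ p ∈ M, ∀ q ∈ M, p ≠ q → p.1 ≠ q.1 ∧ p.2 ≠ q.2)
    (hMsize : (M.filter (fun p => p.1 ∈ A₁ ∧ p.2 ∉ B₁)).card ≤ m - 2) :
    (∀ B' : Finset β,
        B'.card ≤ (univ.filter (fun a => ∃ b ∈ B', E a b ∧ (a, b) ∉ M)).card) ∧
    ∃ g : β → α, Function.Bijective g ∧ ∀ b : β, E (g b) b ∧ (g b, b) ∉ M :=
  stmt3_general m hm E hA hB hdegA hdegB A₁ B₁ hA₁ hB₁ hcomplete f hf_maps hf_inj hf_match M hMdisj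
    hMsize
end

section
/- For every n ≥ 2 and every 2-list-assignment L of the path Pₙ, there exists an L-packing of size 2, i.e., two proper L-colourings c₁, c₂ with c₁(v) ≠ c₂(v) for every vertex v. Hence the list packing number of Pₙ is 2. -/
/-!
Write each list as an ordered pair `(a, b)` of distinct colours and walk along the path,
orienting each pair so that it differs from the previous one in both coordinates. This is
always possible: if `(a, b)` clashes with `(x, y)` in some coordinate, then `(b, a)` clashes
in neither, because `x ≠ y` and `a ≠ b`. The two coordinates then give the two colourings.
-/

section OrientPairs

variable {α : Type*} [DecidableEq α]

def orientPairs (p : ℕ → α × α) : ℕ → α × α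
  | 0 => p 0
  | i + 1 =>
    if (p (i + 1)).1 ≠ (orientPairs p i).1 ∧ (p (i + 1)).2 ≠ (orientPairs p i).2 then p (i + 1)
    else (p (i + 1)).swap

variable (p : ℕ → α × α)

theorem orientPairs_eq_or_eq_swap (i : ℕ) :
    orientPairs p i = p i ∨ orientPairs p i = (p i).swap := by
  cases i with
  | zero => exact .inl rfl
  | succ i =>
    unfold orientPairs
    split_ifs
    · exact .inl rfl
    · exact .inr rfl

theorem orientPairs_pair_eq (i : ℕ) :
    ({(orientPairs p i).1, (orientPairs p i).2} : Finset α) = {(p i).1, (p i).2} := by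
  rcases orientPairs_eq_or_eq_swap p i with h | h <;> rw [h]
  exact Finset.pair_comm _ _

theorem orientPairs_fst_ne_snd {i : ℕ} (hp : (p i).1 ≠ (p i).2) :
    (orientPairs p i).1 ≠ (orientPairs p i).2 := by
  rcases orientPairs_eq_or_eq_swap p i with h | h <;> rw [h]
  exacts [hp, hp.symm]

theorem orientPairs_succ_ne {i : ℕ} (hi : (p i).1 ≠ (p i).2)
    (hsucc : (p (i + 1)).1 ≠ (p (i + 1)).2) :
    (orientPairs p i).1 ≠ (orientPairs p (i + 1)).1 ∧
      (orientPairs p i).2 ≠ (orientPairs p (i + 1)).2 := by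
  have hprev := orientPairs_fst_ne_snd p hi
  rw [orientPairs]
  split_ifs with h
  · exact ⟨h.1.symm, h.2.symm⟩
  · simp only [Prod.fst_swap, Prod.snd_swap]
    grind

end OrientPairs

/-- For every `n ≥ 2` and every 2-list-assignment `L` of the path `Pₙ` (vertices
`Fin n`, edges between consecutive indices), there exist two proper `L`-colourings
disagreeing at every vertex: an `L`-packing of size 2. -/
theorem stmt10 (n : ℕ) (L : Fin n → Finset ℕ)
    (hL : ∀ i : Fin n, (L i).card = 2) :
    ∃ c₁ c₂ : Fin n → ℕ,
      (∀ i : Fin n, c₁ i ∈ L i) ∧ (∀ i : Fin n, c₂ i ∈ L i) ∧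
      (∀ i : ℕ, ∀ h : i + 1 < n, c₁ ⟨i, by omega⟩ ≠ c₁ ⟨i + 1, h⟩) ∧
      (∀ i : ℕ, ∀ h : i + 1 < n, c₂ ⟨i, by omega⟩ ≠ c₂ ⟨i + 1, h⟩) ∧
      ∀ v : Fin n, c₁ v ≠ c₂ v := by
  choose a b hab hLab using fun i => Finset.card_eq_two.mp (hL i)
  let p : ℕ → ℕ × ℕ := fun j => if h : j < n then (a ⟨j, h⟩, b ⟨j, h⟩) else (0, 0)
  have hp (i : Fin n) : p i = (a i, b i) := dif_pos i.2
  have hp_ne (i : Fin n) : (p i).1 ≠ (p i).2 := by simpa [hp] using hab i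
  have hL_eq (i : Fin n) :
      L i = {(orientPairs p i).1, (orientPairs p i).2} := by
    rw [orientPairs_pair_eq, hp, hLab]
  have hadj (i : ℕ) (h : i + 1 < n) :=
    orientPairs_succ_ne p (hp_ne ⟨i, by omega⟩) (hp_ne ⟨i + 1, h⟩)
  exact ⟨fun i => (orientPairs p i).1, fun i => (orientPairs p i).2,
    fun i => by simp [hL_eq], fun i => by simp [hL_eq], fun i h => (hadj i h).1,
    fun i h => (hadj i h).2, fun i => orientPairs_fst_ne_snd p (hp_ne i)⟩
end

section
/- For every n ≥ 3 and every 3-list-assignment L of the cycle Cₙ, there exists an L-packing of size 3 (three pairwise-disjoint proper L-colourings). Combined with the lower bound, the list packing number of Cₙ is exactly 3. -/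
/-!
Enumerate each list by `τ v : Fin 3 ≃ L v`. A packing is then a choice of permutations
`π v` of `Fin 3` (colouring `k` uses `τ v (π v k)` at `v`), and the edge `v ~ v + 1` is proper
exactly when the transition `π (v + 1) * (π v)⁻¹` avoids the partial matching of equal colours
of `L v` and `L (v + 1)`. Extending that matching to a permutation `g v`, every transition
`g v * d` with `d` a derangement, i.e. a 3-cycle, is allowed. Since 3-cycles are even, closed
under conjugation, and every even permutation is a product of two of them, a path of at least two
edges can be steered from the identity to any permutation of the right sign. Closing the cycle
therefore only needs one edge offering a transition of each sign: an edge whose two lists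
differ leaves a colour unmatched, and then both a 3-cycle and a transposition fixing that colour
are allowed. If all lists coincide, every `g v` is the identity and the sign condition holds
automatically.
-/

open Equiv Equiv.Perm Finset

theorem conj_mem_derangements {α : Type*} {d : Perm α} (hd : d ∈ derangements α) (g : Perm α) :
    g⁻¹ * d * g ∈ derangements α := fun x hx =>
  hd (g x) (by rwa [Perm.mul_apply, Perm.mul_apply, Perm.inv_eq_iff_eq] at hx)

theorem exists_derangements_mul_eq_of_sign_eq_one :
    ∀ σ : Perm (Fin 3), sign σ = 1 →
      ∃ u ∈ derangements (Fin 3), ∃ v ∈ derangements (Fin 3), u * v = σ := by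
  simp only [derangements, Set.mem_ofPred_eq]; decide

theorem finRotate_three_mem_derangements : finRotate 3 ∈ derangements (Fin 3) := by
  simp only [derangements, Set.mem_ofPred_eq]; decide

theorem exists_sign_eq_forall_fixed_imp (m₀ : Fin 3) (ε : ℤˣ) :
    ∃ h : Perm (Fin 3), sign h = ε ∧ ∀ m, h m = m → m = m₀ := by
  revert m₀ ε; decide

theorem exists_perm_path_of_sign_eq (g : ℕ → Perm (Fin 3)) {k : ℕ} (hk : 2 ≤ k)
    (T : Perm (Fin 3)) (hT : sign T = ∏ t ∈ range k, sign (g t)) :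
    ∃ π : ℕ → Perm (Fin 3), π 0 = 1 ∧ π k = T ∧
      ∀ t < k, ∃ d ∈ derangements (Fin 3), π (t + 1) = g t * d * π t := by
  induction k, hk using Nat.le_induction generalizing T with
  | base =>
    obtain ⟨u, hu, v, hv, huv⟩ := exists_derangements_mul_eq_of_sign_eq_one
      ((g 1)⁻¹ * T * (g 0)⁻¹) (by
        simp [hT, prod_range_succ, mul_comm, mul_left_comm, Int.units_mul_self])
    refine ⟨fun t => if t = 0 then 1 else if t = 1 then v * g 0 else T, rfl, rfl, ?_⟩
    intro t ht
    interval_cases t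
    · refine ⟨(g 0)⁻¹ * v * g 0, conj_mem_derangements hv _, ?_⟩
      show v * g 0 = g 0 * ((g 0)⁻¹ * v * g 0) * 1
      group
    · refine ⟨u, hu, ?_⟩
      show T = g 1 * u * (v * g 0)
      rw [← mul_assoc, mul_assoc _ u, huv]; group
  | succ k hk ih =>
    obtain ⟨π, h0, hk', hπ⟩ := ih ((g k * finRotate 3)⁻¹ * T) (by
      simp [hT, prod_range_succ, sign_finRotate, mul_assoc]
      rw [mul_comm, mul_assoc, Int.units_mul_self, mul_one])
    refine ⟨Function.update π (k + 1) T, by simp [h0], by simp, fun t ht => ?_⟩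
    rcases Nat.lt_succ_iff_lt_or_eq.mp ht with ht | rfl
    · simpa [Function.update_of_ne (by omega : t + 1 ≠ k + 1),
        Function.update_of_ne (by omega : t ≠ k + 1)] using hπ t ht
    · exact ⟨finRotate 3, finRotate_three_mem_derangements, by
      rw [Function.update_self, Function.update_of_ne (by omega), hk']; group⟩

open Fin.NatCast Fin.CommRing in
theorem exists_perm_cycle_of_sign_eq {n : ℕ} [NeZero n] (hn : 3 ≤ n) (g : Fin n → Perm (Fin 3))
    (j : Fin n) (h : Perm (Fin 3)) (hh : sign h = ∏ v, sign (g v)) :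
    ∃ π : Fin n → Perm (Fin 3), (∀ v ≠ j, ∃ d ∈ derangements (Fin 3), π (v + 1) = g v * d * π v) ∧
      π (j + 1) = g j * h * π j := by
  -- Walk the cycle from `j + 1`, so that the special edge `j ~ j + 1` closes the path.
  set a := j + 1
  have hlast : a + ((n - 1 : ℕ) : Fin n) = j := by
    rw [Nat.cast_sub (by omega), Nat.cast_one, Fin.natCast_self, zero_sub, ← sub_eq_add_neg]
    exact add_sub_cancel_right j 1
  have hprod : ∏ v, sign (g v) = (∏ t ∈ range (n - 1), sign (g (a + t))) * sign (g j) := by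
    rw [← hlast, ← prod_range_succ (fun t : ℕ => sign (g (a + t))), Nat.sub_add_cancel (by omega),
      ← Fin.prod_univ_eq_prod_range]
    exact (Fintype.prod_equiv (Equiv.addLeft a) _ _ (fun v => by simp)).symm
  obtain ⟨π, hπ0, hπj, hπ⟩ := exists_perm_path_of_sign_eq (fun t => g (a + t)) (k := n - 1)
    (by omega) (g j * h)⁻¹ (by
      simp only [sign_inv, map_mul, hh, hprod]
      rw [mul_comm, mul_assoc, Int.units_mul_self, mul_one])
  have hπa : ∀ t < n, π ((a + t - a : Fin n) : ℕ) = π t := fun t ht => by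
    simp [Nat.mod_eq_of_lt ht]
  refine ⟨fun v => π (v - a : Fin n), fun v hv => ?_, ?_⟩
  · obtain ⟨t, ht, rfl⟩ : ∃ t < n - 1, a + (t : Fin n) = v := by
      refine ⟨(v - a : Fin n), lt_of_le_of_ne (by omega) fun ht => hv ?_, by simp⟩
      rw [← hlast, ← ht]; simp
    obtain ⟨d, hd, hπt⟩ := hπ t ht
    refine ⟨d, hd, ?_⟩
    simp only
    rw [add_assoc, ← Nat.cast_add_one, hπa t (by omega), hπa (t + 1) (by omega), hπt]
  · simp only [sub_self, Fin.val_zero, hπ0]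
    have hπj' := hπa (n - 1) (by omega)
    rw [hlast] at hπj'
    rw [hπj', hπj, mul_inv_cancel]

theorem exists_perm_coe_eq_of_mem {α β : Type*} [Fintype α] [DecidableEq β] {s t : Finset β}
    (e : α ≃ s) (e' : α ≃ t) : ∃ g : Perm α, ∀ m, (e m : β) ∈ t → (e' (g m) : β) = e m := by
  obtain ⟨φ, hφ⟩ := Finset.exists_equiv_extend_of_card_eq (t := t)
    (s := univ.filter fun m => (e m : β) ∈ t) (f := fun m => (e m : β))
    (by simpa using Fintype.card_congr e') (by simp [Finset.image_subset_iff])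
    (fun x _ y _ hxy => e.injective (Subtype.ext hxy))
  exact ⟨φ.trans e'.symm, fun m hm => by simpa using hφ m (by simpa using hm)⟩

theorem coe_ne_coe_of_fixed_imp_notMem {α β : Type*} {s t : Finset β} {e : α ≃ s} {e' : α ≃ t}
    {g : Perm α} (hg : ∀ m, (e m : β) ∈ t → (e' (g m) : β) = e m) {h : Perm α}
    (hh : ∀ m, h m = m → (e m : β) ∉ t) (m : α) : (e m : β) ≠ e' (g (h m)) := by
  intro hm
  have hmt : (e m : β) ∈ t := hm ▸ (e' _).2
  refine hh m (g.injective (e'.injective (Subtype.ext ?_))) hmt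
  rw [← hm, hg m hmt]

theorem eq_one_of_forall_orderIsoOfFin_mem {α : Type*} [LinearOrder α] {s t : Finset α} {k : ℕ}
    (hs : s.card = k) (ht : t.card = k) (hst : ∀ m, (s.orderIsoOfFin hs m : α) ∈ t) {g : Perm (Fin k)}
    (hg : ∀ m, (t.orderIsoOfFin ht (g m) : α) = s.orderIsoOfFin hs m) : g = 1 := by
  have hts : ∀ m, (t.orderIsoOfFin ht m : α) = s.orderIsoOfFin hs m := fun m => by
    simpa using congrFun (orderEmbOfFin_unique ht hst (s.orderEmbOfFin hs).strictMono).symm m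
  exact Equiv.ext fun m => (t.orderIsoOfFin ht).injective (Subtype.ext ((hg m).trans (hts m).symm))

/-- For every `n ≥ 3` and every 3-list-assignment `L` of the cycle `Cₙ` (vertices
`Fin n`, adjacency `i ~ i+1` cyclically), there exists an `L`-packing of size 3:
three proper `L`-colourings that pairwise disagree at every vertex. -/
theorem stmt11 (n : ℕ) (hn : 3 ≤ n) (L : Fin n → Finset ℕ)
    (hL : ∀ i : Fin n, (L i).card = 3) :
    ∃ c : Fin 3 → Fin n → ℕ,
      (∀ k : Fin 3, (∀ i : Fin n, c k i ∈ L i) ∧ ∀ i : Fin n, c k i ≠ c k (i + ⟨1, by omega⟩)) ∧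
      ∀ k k' : Fin 3, k ≠ k' → ∀ v : Fin n, c k v ≠ c k' v := by
  have : NeZero n := ⟨by omega⟩
  have hone : (⟨1, by omega⟩ : Fin n) = 1 := Fin.ext (Nat.mod_eq_of_lt (by omega)).symm
  simp only [hone]
  let τ : ∀ v, Fin 3 ≃ L v := fun v => ((L v).orderIsoOfFin (hL v)).toEquiv
  choose g hg using fun v => exists_perm_coe_eq_of_mem (τ v) (τ (v + 1))
  obtain ⟨j, h, hh, hfix⟩ : ∃ j h, sign h = ∏ v, sign (g v) ∧
      ∀ m, h m = m → (τ j m : ℕ) ∉ L (j + 1) := by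
    by_cases hB : ∃ j m₀, (τ j m₀ : ℕ) ∉ L (j + 1)
    · obtain ⟨j, m₀, hm₀⟩ := hB
      obtain ⟨h, hh, hfix⟩ := exists_sign_eq_forall_fixed_imp m₀ (∏ v, sign (g v))
      exact ⟨j, h, hh, fun m hm => hfix m hm ▸ hm₀⟩
    · push Not at hB
      have hg1 : ∀ v, g v = 1 := fun v =>
        eq_one_of_forall_orderIsoOfFin_mem (hL v) (hL (v + 1)) (hB v) fun m => hg v m (hB v m)
      exact ⟨0, finRotate 3, by simp [hg1, sign_finRotate],
        fun m hm => absurd hm (finRotate_three_mem_derangements m)⟩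
  obtain ⟨π, hπ, hπj⟩ := exists_perm_cycle_of_sign_eq hn g j h hh
  refine ⟨fun k v => τ v (π v k), fun k => ⟨fun v => (τ v _).2, fun v => ?_⟩,
    fun k k' hkk' v hv => hkk' ((π v).injective ((τ v).injective (Subtype.ext hv)))⟩
  show (τ v (π v k) : ℕ) ≠ τ (v + 1) (π (v + 1) k)
  by_cases hv : v = j
  · subst hv
    rw [hπj]
    exact coe_ne_coe_of_fixed_imp_notMem (hg v) hfix _
  · obtain ⟨d, hd, hπv⟩ := hπ v hv
    rw [hπv]
    exact coe_ne_coe_of_fixed_imp_notMem (hg v) (fun m hm => absurd hm (hd m)) _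
end

section
/- Let G be a graph of degeneracy d. Then the correspondence packing number of G is at most 2d, i.e., for every 2d-fold correspondence-cover (L,H) of G, the cover graph H has chromatic number 2d (admits a partition into 2d independent transversals). -/
/-!
Colour the cover greedily along a degeneracy ordering. When a vertex `v` with at most `d`
already-coloured neighbours `N` is added, each `x ∈ L v` sees at most `d` colours on its
neighbours over `N` (one per matching), and each colour is seen by at most `d` elements of
`L v` (the colour occurs at most once in each `L u`, and that vertex has at most one neighbour
in `L v`). With `2d` colours the bipartite graph "`x` may take colour `c`" then satisfies Hall's
condition: small sets of `L v` have at least `d` available colours each, and a set of more than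
`d` elements has every colour available to one of them.
-/

/-- A correspondence-cover `(L, H)` of a graph `G`: the sets `L v` partition `V(H)`,
each `L v` induces a clique in `H`, there are no edges of `H` between lists of
non-adjacent vertices, and the edges of `H` between lists of adjacent vertices of
`G` form a matching. -/
structure CorrCover {V W : Type*} (G : SimpleGraph V) (H : SimpleGraph W)
    (L : V → Finset W) : Prop where
  partition : ∀ w : W, ∃! v : V, w ∈ L v
  clique : ∀ v : V, ∀ x ∈ L v, ∀ y ∈ L v, x ≠ y → H.Adj x y
  nonadj : ∀ u v : V, u ≠ v → ¬ G.Adj u v → ∀ x ∈ L u, ∀ y ∈ L v, ¬ H.Adj x y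
  matching : ∀ u v : V, G.Adj u v → ∀ x ∈ L u, ∀ y ∈ L v, ∀ y2 ∈ L v,
      H.Adj x y → H.Adj x y2 → y = y2

open Finset Function

theorem exists_injective_forall_notMem {ι α : Type*} [Fintype ι] [Fintype α]
    (F : ι → Finset α) (d : ℕ) (hι : Fintype.card ι ≤ Fintype.card α)
    (hd : 2 * d ≤ Fintype.card α) (hF : ∀ x, #(F x) ≤ d)
    (hF' : ∀ c (A : Finset ι), (∀ x ∈ A, c ∈ F x) → #A ≤ d) :
    ∃ g : ι → α, Injective g ∧ ∀ x, g x ∉ F x := by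
  classical
  suffices hall : ∀ A : Finset ι, #A ≤ #(A.biUnion fun x => (F x)ᶜ) by
    obtain ⟨g, hg, hgF⟩ := (all_card_le_biUnion_card_iff_exists_injective _).1 hall
    exact ⟨g, hg, fun x => mem_compl.1 (hgF x)⟩
  intro A
  rcases A.eq_empty_or_nonempty with rfl | ⟨x, hx⟩
  · simp
  rcases le_or_gt #A d with hA | hA
  · calc #A ≤ #(F x)ᶜ := by have := hF x; rw [card_compl]; omega
      _ ≤ _ := card_le_card (subset_biUnion_of_mem (fun x => (F x)ᶜ) hx)
  · have hcover : A.biUnion (fun x => (F x)ᶜ) = univ := eq_univ_of_forall fun c => by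
      by_contra hc
      simp only [mem_biUnion, mem_compl, not_exists, not_and, not_not] at hc
      exact (hF' c A hc).not_gt hA
    rw [hcover, card_univ]
    exact (card_le_univ A).trans hι

section

variable {V W α : Type*} {G : SimpleGraph V} {H : SimpleGraph W} {L : V → Finset W}

def IsProperColoringOver (H : SimpleGraph W) (L : V → Finset W) (S : Finset V) (f : W → α) :
    Prop :=
  ∀ u ∈ S, ∀ v ∈ S, ∀ x ∈ L u, ∀ y ∈ L v, H.Adj x y → f x ≠ f y

def neighborsOver [DecidableEq W] (H : SimpleGraph W) [DecidableRel H.Adj] (L : V → Finset W)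
    (N : Finset V) (x : W) : Finset W :=
  N.biUnion fun u => (L u).filter (H.Adj x)

namespace CorrCover

theorem eq_of_mem_of_mem (hc : CorrCover G H L) {w : W} {u v : V} (hu : w ∈ L u)
    (hv : w ∈ L v) : u = v :=
  (hc.partition w).unique hu hv

theorem nonempty_of_card_le [Fintype α] (hc : CorrCover G H L)
    (hL : ∀ v, #(L v) ≤ Fintype.card α) (w : W) : Nonempty α := by
  obtain ⟨v, hv, -⟩ := hc.partition w
  exact Fintype.card_pos_iff.1 ((card_pos.2 ⟨w, hv⟩).trans_le (hL v))

theorem card_filter_adj_le_one [DecidableRel H.Adj] (hc : CorrCover G H L) {u v : V}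
    (huv : G.Adj u v) {x : W} (hx : x ∈ L u) : #((L v).filter (H.Adj x)) ≤ 1 :=
  card_le_one.2 fun _ hy _ hy' =>
    hc.matching u v huv x hx _ (mem_filter.1 hy).1 _ (mem_filter.1 hy').1
      (mem_filter.1 hy).2 (mem_filter.1 hy').2

theorem injOn_of_isProperColoringOver (hc : CorrCover G H L) {S : Finset V} {f : W → α}
    (hf : IsProperColoringOver H L S f) {u : V} (hu : u ∈ S) : Set.InjOn f (L u) := by
  intro x hx y hy hxy
  by_contra hne
  exact hf u hu u hu x hx y hy (hc.clique u x hx y hy hne) hxy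

section NeighborsOver

variable [DecidableEq W] [DecidableRel H.Adj] {N : Finset V} {v : V}

theorem card_neighborsOver_le (hc : CorrCover G H L) (hN : ∀ u ∈ N, G.Adj v u) {x : W}
    (hx : x ∈ L v) : #(neighborsOver H L N x) ≤ #N :=
  (card_biUnion_le_card_mul N _ 1 fun u hu => hc.card_filter_adj_le_one (hN u hu) hx).trans_eq
    (mul_one _)

theorem card_le_of_forall_mem_image_neighborsOver [DecidableEq α] (hc : CorrCover G H L)
    {T : Finset V} {f : W → α} (hf : IsProperColoringOver H L T f)
    (hN : ∀ u ∈ N, u ∈ T ∧ G.Adj v u) {c : α} {A : Finset W}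
    (hA : ∀ x ∈ A, x ∈ L v ∧ c ∈ (neighborsOver H L N x).image f) : #A ≤ #N := by
  let Y := N.biUnion fun u => (L u).filter (f · = c)
  have hY : #Y ≤ #N * 1 := card_biUnion_le_card_mul _ _ _ fun u hu =>
    card_le_one.2 fun y hy y' hy' =>
      hc.injOn_of_isProperColoringOver hf (hN u hu).1 (mem_filter.1 hy).1
        (mem_filter.1 hy').1 ((mem_filter.1 hy).2.trans (mem_filter.1 hy').2.symm)
  have hsub : A ⊆ Y.biUnion fun y => (L v).filter (H.Adj y) := by
    intro x hx
    obtain ⟨hxv, hxc⟩ := hA x hx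
    obtain ⟨y, hy, hyc⟩ := mem_image.1 hxc
    obtain ⟨u, hu, hyu⟩ := mem_biUnion.1 hy
    rw [mem_filter] at hyu
    exact mem_biUnion.2
      ⟨y, mem_biUnion.2 ⟨u, hu, mem_filter.2 ⟨hyu.1, hyc⟩⟩, mem_filter.2 ⟨hxv, hyu.2.symm⟩⟩
  calc #A ≤ #Y * 1 := (card_le_card hsub).trans <| card_biUnion_le_card_mul _ _ _ fun y hy => by
        obtain ⟨u, hu, hyu⟩ := mem_biUnion.1 hy
        exact hc.card_filter_adj_le_one (hN u hu).2.symm (mem_filter.1 hyu).1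
    _ ≤ #N := by simpa using hY

end NeighborsOver

theorem exists_isProperColoringOver_insert [Fintype α] [DecidableEq V] [DecidableRel G.Adj]
    (hc : CorrCover G H L) {d : ℕ} (hd : 2 * d ≤ Fintype.card α) {T : Finset V} {v : V}
    (hv : v ∉ T) (hLv : #(L v) ≤ Fintype.card α) (hN : #(T.filter (G.Adj v)) ≤ d)
    {f : W → α} (hf : IsProperColoringOver H L T f) :
    ∃ f' : W → α, IsProperColoringOver H L (insert v T) f' := by
  classical
  set N := T.filter (G.Adj v)
  have hNT : ∀ u ∈ N, u ∈ T ∧ G.Adj v u := fun u hu => mem_filter.1 hu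
  let F : W → Finset α := fun x => (neighborsOver H L N x).image f
  obtain ⟨g, hg, hgF⟩ := exists_injective_forall_notMem (fun x : L v => F x) d
    (by rwa [Fintype.card_coe]) hd
    (fun x => card_image_le.trans <|
      (hc.card_neighborsOver_le (fun u hu => (hNT u hu).2) x.2).trans hN)
    (fun c A hA => by
      rw [← card_map (Embedding.subtype _)]
      refine (hc.card_le_of_forall_mem_image_neighborsOver hf hNT (c := c)
        fun x hx => ?_).trans hN
      obtain ⟨x, hxA, rfl⟩ := mem_map.1 hx
      exact ⟨x.2, hA x hxA⟩)
  let f' : W → α := fun w => if h : w ∈ L v then g ⟨w, h⟩ else f w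
  have hold : ∀ {u}, u ∈ T → ∀ {x}, x ∈ L u → f' x = f x := fun hu x hx =>
    dif_neg fun h => hv (by rwa [← hc.eq_of_mem_of_mem hx h])
  have hnew : ∀ x ∈ L v, ∀ u ∈ T, ∀ y ∈ L u, H.Adj x y → f' x ≠ f' y := by
    intro x hx u hu y hy hxy
    have hvu : G.Adj v u := by_contra fun h =>
      hc.nonadj v u (ne_of_mem_of_not_mem hu hv).symm h x hx y hy hxy
    have hfy : f y ∈ F x :=
      mem_image_of_mem f (mem_biUnion.2 ⟨u, mem_filter.2 ⟨hu, hvu⟩, mem_filter.2 ⟨hy, hxy⟩⟩)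
    rw [hold hu hy]
    simp only [f', dif_pos hx]
    exact fun he => hgF ⟨x, hx⟩ (he ▸ hfy)
  refine ⟨f', fun u₁ hu₁ u₂ hu₂ x hx y hy hxy => ?_⟩
  rw [mem_insert] at hu₁ hu₂
  rcases hu₁ with h₁ | hu₁ <;> rcases hu₂ with h₂ | hu₂
  · rw [h₁] at hx
    rw [h₂] at hy
    simp only [f', dif_pos hx, dif_pos hy]
    exact fun he => hxy.ne (congrArg Subtype.val (hg he))
  · exact hnew x (h₁ ▸ hx) u₂ hu₂ y hy hxy
  · exact (hnew y (h₂ ▸ hy) u₁ hu₁ x hx hxy.symm).symm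
  · rw [hold hu₁ hx, hold hu₂ hy]
    exact hf u₁ hu₁ u₂ hu₂ x hx y hy hxy

theorem exists_isProperColoringOver [Fintype α] [DecidableRel G.Adj]
    (hc : CorrCover G H L) {d : ℕ}
    (hdegen : ∀ S : Finset V, S.Nonempty → ∃ v ∈ S, #(S.filter (fun u => G.Adj v u)) ≤ d)
    (hd : 2 * d ≤ Fintype.card α) (hL : ∀ v, #(L v) ≤ Fintype.card α) (S : Finset V) :
    ∃ f : W → α, IsProperColoringOver H L S f := by
  classical
  induction S using Finset.strongInduction with
  | H S ih =>
  rcases S.eq_empty_or_nonempty with rfl | hS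
  · exact ⟨fun w => (hc.nonempty_of_card_le hL w).some, by simp [IsProperColoringOver]⟩
  obtain ⟨v, hv, hdeg⟩ := hdegen S hS
  obtain ⟨f, hf⟩ := ih (S.erase v) (erase_ssubset hv)
  rw [← insert_erase hv]
  exact hc.exists_isProperColoringOver_insert hd (notMem_erase v S) (hL v)
    ((card_le_card (filter_subset_filter _ (erase_subset v S))).trans hdeg) hf

end CorrCover

end

theorem stmt13_general {V W : Type*} [Fintype V] (G : SimpleGraph V)
    [DecidableRel G.Adj] (d : ℕ)
    (hdegen : ∀ S : Finset V, S.Nonempty →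
      ∃ v ∈ S, (S.filter (fun u => G.Adj v u)).card ≤ d)
    (H : SimpleGraph W) (L : V → Finset W)
    (hcover : CorrCover G H L) (hfold : ∀ v : V, (L v).card = 2 * d) :
    ∃ f : W → Fin (2 * d), ∀ x y : W, H.Adj x y → f x ≠ f y := by
  obtain ⟨f, hf⟩ := hcover.exists_isProperColoringOver (α := Fin (2 * d)) hdegen (by simp)
    (fun v => by simp [hfold]) univ
  refine ⟨f, fun x y hxy => ?_⟩
  obtain ⟨u, hu, -⟩ := hcover.partition x
  obtain ⟨v, hv, -⟩ := hcover.partition y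
  exact hf u (mem_univ u) v (mem_univ v) x hu y hv hxy

/-- If `G` has degeneracy at most `d` then every `2d`-fold correspondence-cover
`(L,H)` of `G` has chromatic number `2d`: its cover graph admits a proper colouring
with `2d` colours (a partition into `2d` independent transversals). -/
theorem stmt13 {V W : Type*} [Fintype V] [DecidableEq V] (G : SimpleGraph V)
    [DecidableRel G.Adj] (d : ℕ)
    (hdegen : ∀ S : Finset V, S.Nonempty →
      ∃ v ∈ S, (S.filter (fun u => G.Adj v u)).card ≤ d)
    (H : SimpleGraph W) (L : V → Finset W)
    (hcover : CorrCover G H L) (hfold : ∀ v : V, (L v).card = 2 * d) :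
    ∃ f : W → Fin (2 * d), ∀ x y : W, H.Adj x y → f x ≠ f y :=
  stmt13_general G d hdegen H L hcover hfold
end

section
/- Let G be a graph and let (L,H) be a correspondence-cover of G such that |L(v)| ≥ deg(v) + 1 for each vertex v. Then there exists a probability distribution on independent sets I of H such that for every vertex v of G and every x ∈ L(v), Pr(x ∈ I) ≥ 1/|L(v)|. In particular, χ_f(H) ≤ Δ(G)+1 when all lists have size Δ(G)+1. -/
/-!
Induct on the set of vertices still to be coloured. Let `v` carry a longest list, of size `ℓ`.
For each neighbour `u` of `v`, extend the matching of `H` between `L u` and `L v` to an injection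
`σ u : L u → L v` (possible as `|L u| ≤ ℓ`). Choose `x ∈ L v` uniformly, put it in the independent
set, and recurse on `G - v` where each neighbour `u` loses the colour `(σ u)⁻¹ x` if there is one:
degrees drop by one exactly where lists may, so the hypothesis `deg + 1 ≤ |list|` is preserved,
and no surviving colour is adjacent to `x`. If `|L u| = k`, a colour `y ∈ L u` survives in a list
of size `k - 1` for the `k - 1` colours `x ∈ σ u (L u) \ {σ u y}` and in a list of size `k` for the
`ℓ - k` colours outside `σ u (L u)`, so `Pr(y ∈ I) ≥ ((k - 1)/(k - 1) + (ℓ - k)/k)/ℓ = 1/k`.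
-/

open Finset

theorem exists_injOn_mapsTo_extending_matching {α : Type*} [DecidableEq α] {A B : Finset α}
    (r : α → α → Prop) (hcard : #B ≤ #A)
    (hfun : ∀ y ∈ B, ∀ x ∈ A, ∀ x' ∈ A, r y x → r y x' → x = x')
    (hinj : ∀ x ∈ A, ∀ y ∈ B, ∀ y' ∈ B, r y x → r y' x → y = y') :
    ∃ g : α → α, Set.InjOn g B ∧ Set.MapsTo g B A ∧ ∀ y ∈ B, ∀ x ∈ A, r y x → g y = x := by
  classical
  obtain rfl | ⟨b, -⟩ := B.eq_empty_or_nonempty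
  · exact ⟨id, by simp, by simp [Set.MapsTo], by simp⟩
  have : Nonempty α := ⟨b⟩
  let partner (y : α) : α := if h : ∃ x ∈ A, r y x then h.choose else y
  have partner_spec (y : α) (h : ∃ x ∈ A, r y x) : partner y ∈ A ∧ r y (partner y) := by
    simpa only [partner, dif_pos h] using h.choose_spec
  let Bm := {y ∈ B | ∃ x ∈ A, r y x}
  have hAm : Bm.image partner ⊆ A := by
    simp only [image_subset_iff, Bm, mem_filter]
    exact fun y hy => (partner_spec y hy.2).1
  have hrest : #(B \ Bm) ≤ #(A \ Bm.image partner) := by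
    rw [card_sdiff_of_subset (show Bm ⊆ B from filter_subset _ _), card_sdiff_of_subset hAm]
    have := card_image_le (s := Bm) (f := partner)
    omega
  obtain ⟨e, he_maps, he_inj⟩ := (B \ Bm).finite_toSet.exists_injOn_of_encard_le
    (t := ((A \ Bm.image partner : Finset α) : Set α))
    (by rwa [Set.encard_coe_eq_coe_finsetCard, Set.encard_coe_eq_coe_finsetCard, Nat.cast_le])
  refine ⟨fun y => if y ∈ Bm then partner y else e y, ?_, ?_, ?_⟩
  · intro y₁ hy₁ y₂ hy₂ heq
    have he (y : α) (hy : y ∈ B) (hm : y ∉ Bm) : e y ∈ A \ Bm.image partner :=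
      he_maps (by simp [hy, hm])
    by_cases h₁ : y₁ ∈ Bm <;> by_cases h₂ : y₂ ∈ Bm <;> simp only [h₁, h₂, if_true, if_false] at heq
    · have hr₁ := (partner_spec y₁ (mem_filter.1 h₁).2).2
      have hr₂ := (partner_spec y₂ (mem_filter.1 h₂).2)
      exact hinj _ hr₂.1 y₁ hy₁ y₂ hy₂ (heq ▸ hr₁) hr₂.2
    · exact absurd (heq ▸ mem_image_of_mem partner h₁) (mem_sdiff.1 (he y₂ hy₂ h₂)).2
    · exact absurd (heq ▸ mem_image_of_mem partner h₂) (mem_sdiff.1 (he y₁ hy₁ h₁)).2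
    · exact he_inj (by simp [hy₁, h₁]) (by simp [hy₂, h₂]) heq
  · intro y hy
    by_cases hm : y ∈ Bm
    · simpa only [hm, if_true, mem_coe] using (partner_spec y (mem_filter.1 hm).2).1
    · simp only [hm, if_false]
      exact (mem_sdiff.1 (he_maps (by simp [hy, hm]))).1
  · intro y hy x hx hr
    have hm : y ∈ Bm := mem_filter.2 ⟨hy, x, hx, hr⟩
    have hp := partner_spec y ⟨x, hx, hr⟩
    simpa only [hm, if_true] using hfun y hy _ hp.1 x hx hp.2 hr

lemma exists_injOn_mapsTo_of_adj {V W : Type*} [DecidableEq W] {G : SimpleGraph V}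
    {H : SimpleGraph W} {L M : V → Finset W}
    (hmatch : ∀ u v : V, G.Adj u v → ∀ x ∈ L u, ∀ y ∈ L v, ∀ y2 ∈ L v,
      H.Adj x y → H.Adj x y2 → y = y2)
    (hML : M ≤ L) {u v : V} (hvu : G.Adj v u) (hcard : #(M u) ≤ #(M v)) :
    ∃ g : W → W, Set.InjOn g (M u) ∧ Set.MapsTo g (M u) (M v) ∧
      ∀ y ∈ M u, ∀ x ∈ M v, H.Adj y x → g y = x :=
  exists_injOn_mapsTo_extending_matching H.Adj hcard
    (fun y hy x hx x' hx' => hmatch u v hvu.symm y (hML u hy) x (hML v hx) x' (hML v hx'))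
    (fun x hx y hy y' hy' h h' =>
      hmatch v u hvu x (hML v hx) y (hML u hy) y' (hML u hy') h.symm h'.symm)

section Distributions

variable {W : Type*} [Fintype W] [DecidableEq W]

def marginal (p : Finset W → ℝ) (y : W) : ℝ := ∑ S with y ∈ S, p S

structure IsIndepSetDistrib (H : SimpleGraph W) (U : Finset W) (p : Finset W → ℝ) : Prop where
  nonneg : ∀ S, 0 ≤ p S
  sum_eq_one : ∑ S, p S = 1
  subset : ∀ S, 0 < p S → S ⊆ U
  isIndepSet : ∀ S, 0 < p S → H.IsIndepSet (S : Set W)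

lemma marginal_nonneg {p : Finset W → ℝ} (hp : ∀ S, 0 ≤ p S) (y : W) : 0 ≤ marginal p y :=
  sum_nonneg fun S _ => hp S

lemma isIndepSetDistrib_indicator_empty (H : SimpleGraph W) (U : Finset W) :
    IsIndepSetDistrib H U (fun S => if S = ∅ then 1 else 0) where
  nonneg S := by split <;> norm_num
  sum_eq_one := by simp
  subset S hS := by
    obtain rfl : S = ∅ := by by_contra h; simp [h] at hS
    exact empty_subset U
  isIndepSet S hS := by
    obtain rfl : S = ∅ := by by_contra h; simp [h] at hS
    simp

/-- The law of `insert x T`, where `x` is uniform on `A` and then `T` is drawn from `q x`. -/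
noncomputable def insertUniform (A : Finset W) (q : W → Finset W → ℝ) (S : Finset W) : ℝ :=
  (∑ x ∈ A, ∑ T with insert x T = S, q x T) / #A

lemma exists_pos_of_insertUniform_pos {A : Finset W} {q : W → Finset W → ℝ} {S : Finset W}
    (hS : 0 < insertUniform A q S) : ∃ x ∈ A, ∃ T, insert x T = S ∧ 0 < q x T := by
  by_contra! h
  exact hS.not_ge <| div_nonpos_of_nonpos_of_nonneg
    (sum_nonpos fun x hx => sum_nonpos fun T hT => h x hx T (mem_filter.1 hT).2) (Nat.cast_nonneg _)

lemma IsIndepSetDistrib.insertUniform {H : SimpleGraph W} {A U : Finset W}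
    {U' : W → Finset W} {q : W → Finset W → ℝ} (hA : A.Nonempty)
    (hq : ∀ x ∈ A, IsIndepSetDistrib H (U' x) (q x)) (hU : ∀ x ∈ A, insert x (U' x) ⊆ U)
    (hadj : ∀ x ∈ A, ∀ t ∈ U' x, ¬ H.Adj x t) :
    IsIndepSetDistrib H U (insertUniform A q) where
  nonneg S := div_nonneg (sum_nonneg fun x hx => sum_nonneg fun T _ => (hq x hx).nonneg T)
    (Nat.cast_nonneg _)
  sum_eq_one := by
    have hA' : (#A : ℝ) ≠ 0 := by exact_mod_cast hA.card_pos.ne'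
    simp only [_root_.insertUniform]
    rw [← sum_div, sum_comm, div_eq_one_iff_eq hA']
    simp only [sum_fiberwise]
    rw [sum_congr rfl fun x hx => (hq x hx).sum_eq_one]
    simp
  subset S hS := by
    obtain ⟨x, hx, T, rfl, hT⟩ := exists_pos_of_insertUniform_pos hS
    exact (insert_subset_insert x ((hq x hx).subset T hT)).trans (hU x hx)
  isIndepSet S hS := by
    obtain ⟨x, hx, T, rfl, hT⟩ := exists_pos_of_insertUniform_pos hS
    rw [coe_insert]
    refine ((hq x hx).isIndepSet T hT).insert fun t ht _ => ?_
    have ht' := (hq x hx).subset T hT ht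
    exact ⟨hadj x hx t ht', fun h => hadj x hx t ht' h.symm⟩

lemma marginal_insertUniform (A : Finset W) (q : W → Finset W → ℝ) (y : W) :
    marginal (insertUniform A q) y = (∑ x ∈ A, ∑ T with y ∈ insert x T, q x T) / #A := by
  simp only [marginal, insertUniform]
  rw [← sum_div, sum_comm]
  simp only [sum_fiberwise_eq_sum_filter, mem_filter, mem_univ, true_and]

lemma inv_card_le_marginal_insertUniform {A : Finset W} {q : W → Finset W → ℝ}
    (hq : ∀ x ∈ A, ∀ T, 0 ≤ q x T) (hq₁ : ∀ x ∈ A, ∑ T, q x T = 1) {y : W} (hy : y ∈ A) :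
    1 / (#A : ℝ) ≤ marginal (insertUniform A q) y := by
  rw [marginal_insertUniform]
  gcongr
  calc (1 : ℝ) = ∑ T with y ∈ insert y T, q y T := by simpa using (hq₁ y hy).symm
    _ ≤ _ := single_le_sum (f := fun x => ∑ T with y ∈ insert x T, q x T)
      (fun x hx => sum_nonneg fun T _ => hq x hx T) hy

lemma sum_marginal_div_le_marginal_insertUniform {A : Finset W} {q : W → Finset W → ℝ}
    (hq : ∀ x ∈ A, ∀ T, 0 ≤ q x T) (y : W) :
    (∑ x ∈ A, marginal (q x) y) / #A ≤ marginal (insertUniform A q) y := by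
  rw [marginal_insertUniform]
  gcongr with x hx
  exact sum_le_sum_of_subset_of_nonneg (monotone_filter_right _ fun _ _ => mem_insert_of_mem)
    fun T _ _ => hq x hx T

end Distributions

section Counting

variable {α : Type*} [DecidableEq α]

lemma card_le_card_filter_ne_add_one {B : Finset α} {σ : α → α} (hσ : Set.InjOn σ B) (x : α) :
    #B ≤ #{b ∈ B | σ b ≠ x} + 1 := by
  have hfib : #{b ∈ B | ¬σ b ≠ x} ≤ 1 := card_le_one.2 fun b hb b' hb' => by
    simp only [mem_filter, not_not] at hb hb'
    exact hσ hb.1 hb'.1 (hb.2.trans hb'.2.symm)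
  have := card_filter_add_card_filter_not (s := B) (fun b => σ b ≠ x)
  omega

lemma filter_ne_eq_erase {B : Finset α} {σ : α → α} (hσ : Set.InjOn σ B) {b : α} (hb : b ∈ B) :
    {b' ∈ B | σ b' ≠ σ b} = B.erase b := by
  ext b'
  simp only [mem_filter, mem_erase]
  refine ⟨fun h => ⟨fun e => h.2 (e ▸ rfl), h.1⟩, fun h => ⟨h.2, fun e => h.1 (hσ h.2 hb e)⟩⟩

lemma card_div_card_le_sum_inv_card_filter_ne {A B : Finset α} {σ : α → α}
    (hinj : Set.InjOn σ B) (hmaps : Set.MapsTo σ B A) (hB : 2 ≤ #B) {y : α} (hy : y ∈ B) :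
    (#A : ℝ) / #B ≤
      ∑ x ∈ A, if y ∈ {b ∈ B | σ b ≠ x} then (#{b ∈ B | σ b ≠ x} : ℝ)⁻¹ else 0 := by
  set f : α → ℝ := fun x =>
    if y ∈ {b ∈ B | σ b ≠ x} then (#{b ∈ B | σ b ≠ x} : ℝ)⁻¹ else 0 with hf
  have himage : B.image σ ⊆ A := image_subset_iff.2 fun b hb => hmaps hb
  have hcard_image : #(B.image σ) = #B := card_image_of_injOn hinj
  have hout : ∀ x ∈ A \ B.image σ, f x = (#B : ℝ)⁻¹ := by
    intro x hx
    have hfil : {b ∈ B | σ b ≠ x} = B := filter_true_of_mem fun b hb e =>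
      (mem_sdiff.1 hx).2 (e ▸ mem_image_of_mem σ hb)
    simp only [hf, hfil, if_pos hy]
  have hin : ∀ b ∈ B.erase y, f (σ b) = ((#B : ℝ) - 1)⁻¹ := by
    intro b hb
    obtain ⟨hby, hb⟩ := mem_erase.1 hb
    have hmem : y ∈ B.erase b := mem_erase.2 ⟨hby.symm, hy⟩
    simp only [hf, filter_ne_eq_erase hinj hb, if_pos hmem, card_erase_of_mem hb]
    rw [Nat.cast_sub (by omega), Nat.cast_one]
  have hB' : (#B : ℝ) - 1 ≠ 0 := by
    have : (2 : ℝ) ≤ #B := by exact_mod_cast hB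
    linarith
  calc (#A : ℝ) / #B
      = #(A \ B.image σ) * (#B : ℝ)⁻¹ + #(B.erase y) * ((#B : ℝ) - 1)⁻¹ := by
        rw [card_erase_of_mem hy, Nat.cast_sub (by omega), ← card_sdiff_add_card_eq_card himage,
          hcard_image]
        push_cast
        field_simp
    _ = ∑ x ∈ A \ B.image σ, f x + ∑ b ∈ B.erase y, f (σ b) := by
        rw [sum_congr rfl hout, sum_congr rfl hin]
        simp
    _ ≤ ∑ x ∈ A \ B.image σ, f x + ∑ b ∈ B, f (σ b) := by
        gcongr
        exact erase_subset y B
    _ = ∑ x ∈ A, f x := by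
        rw [← sum_image (fun b hb b' hb' e => hinj hb hb' e), sum_sdiff himage]

end Counting

section Residual

variable {V W : Type*} [DecidableEq W] (G : SimpleGraph V) [DecidableRel G.Adj]

def residualLists (M : V → Finset W) (σ : V → W → W) (v : V) (x : W) (u : V) : Finset W :=
  if G.Adj v u then {y ∈ M u | σ u y ≠ x} else M u

variable {G} {M : V → Finset W} {σ : V → W → W} {v u : V} {x : W}

lemma residualLists_subset : residualLists G M σ v x u ⊆ M u := by
  unfold residualLists
  split_ifs
  exacts [filter_subset _ _, subset_rfl]

lemma card_filter_adj_erase_add_one_le_card_residualLists [DecidableEq V] {s : Finset V}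
    (hσ : G.Adj v u → Set.InjOn (σ u) (M u)) (hv : v ∈ s)
    (hdeg : #{w ∈ s | G.Adj u w} + 1 ≤ #(M u)) :
    #{w ∈ s.erase v | G.Adj u w} + 1 ≤ #(residualLists G M σ v x u) := by
  rw [filter_erase]
  unfold residualLists
  split_ifs with hadj
  · have hv' : v ∈ {w ∈ s | G.Adj u w} := mem_filter.2 ⟨hv, hadj.symm⟩
    have := card_le_card_filter_ne_add_one (hσ hadj) x
    have := card_pos.2 ⟨v, hv'⟩
    rw [card_erase_of_mem hv']
    omega
  · rwa [erase_eq_of_notMem fun h => hadj (mem_filter.1 h).2.symm]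

lemma not_adj_of_mem_residualLists {H : SimpleGraph W} {L : V → Finset W}
    (hnonadj : ∀ u v : V, u ≠ v → ¬ G.Adj u v → ∀ x ∈ L u, ∀ y ∈ L v, ¬ H.Adj x y)
    (hML : M ≤ L) (hσ : G.Adj v u → ∀ y ∈ M u, ∀ x ∈ M v, H.Adj y x → σ u y = x)
    (huv : u ≠ v) (hx : x ∈ M v) {t : W} (ht : t ∈ residualLists G M σ v x u) : ¬ H.Adj x t := by
  unfold residualLists at ht
  split_ifs at ht with hadj
  · exact fun h => (mem_filter.1 ht).2 (hσ hadj t (mem_filter.1 ht).1 x hx h.symm)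
  · exact hnonadj v u huv.symm hadj x (hML v hx) t (hML u ht)

lemma card_div_card_le_sum_inv_card_residualLists (hσinj : G.Adj v u → Set.InjOn (σ u) (M u))
    (hσmaps : G.Adj v u → Set.MapsTo (σ u) (M u) (M v)) (hcard : G.Adj v u → 2 ≤ #(M u))
    {y : W} (hy : y ∈ M u) :
    (#(M v) : ℝ) / #(M u) ≤ ∑ x ∈ M v,
      if y ∈ residualLists G M σ v x u then (#(residualLists G M σ v x u) : ℝ)⁻¹ else 0 := by
  unfold residualLists
  by_cases hadj : G.Adj v u
  · simpa only [hadj, if_true] using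
      card_div_card_le_sum_inv_card_filter_ne (hσinj hadj) (hσmaps hadj) (hcard hadj) hy
  · simp [hadj, hy, div_eq_mul_inv]

lemma inv_card_le_marginal_insertUniform_residualLists [Fintype W] {q : W → Finset W → ℝ}
    (hMv : (M v).Nonempty) (hq : ∀ x T, 0 ≤ q x T)
    (hq_marg : ∀ x, ∀ y ∈ residualLists G M σ v x u,
      1 / (#(residualLists G M σ v x u) : ℝ) ≤ marginal (q x) y)
    (hσinj : G.Adj v u → Set.InjOn (σ u) (M u))
    (hσmaps : G.Adj v u → Set.MapsTo (σ u) (M u) (M v)) (hcard : G.Adj v u → 2 ≤ #(M u))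
    {y : W} (hy : y ∈ M u) :
    1 / (#(M u) : ℝ) ≤ marginal (insertUniform (M v) q) y := by
  have hMv' : (#(M v) : ℝ) ≠ 0 := by exact_mod_cast hMv.card_pos.ne'
  calc 1 / (#(M u) : ℝ) = (#(M v) / #(M u)) / #(M v) := by field_simp
    _ ≤ (∑ x ∈ M v, if y ∈ residualLists G M σ v x u then
          (#(residualLists G M σ v x u) : ℝ)⁻¹ else 0) / #(M v) := by
        gcongr
        exact card_div_card_le_sum_inv_card_residualLists hσinj hσmaps hcard hy
    _ ≤ (∑ x ∈ M v, marginal (q x) y) / #(M v) := by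
        gcongr with x
        split_ifs with h
        · simpa using hq_marg x y h
        · exact marginal_nonneg (hq x) y
    _ ≤ _ := sum_marginal_div_le_marginal_insertUniform (fun x _ => hq x) y

end Residual

theorem exists_isIndepSetDistrib_inv_card_le_marginal {V W : Type*} [Fintype W] [DecidableEq W]
    [DecidableEq V] {G : SimpleGraph V} [DecidableRel G.Adj] {H : SimpleGraph W}
    {L : V → Finset W}
    (hnonadj : ∀ u v : V, u ≠ v → ¬ G.Adj u v → ∀ x ∈ L u, ∀ y ∈ L v, ¬ H.Adj x y)
    (hmatch : ∀ u v : V, G.Adj u v → ∀ x ∈ L u, ∀ y ∈ L v, ∀ y2 ∈ L v,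
      H.Adj x y → H.Adj x y2 → y = y2)
    (s : Finset V) (M : V → Finset W) (hML : M ≤ L)
    (hdeg : ∀ u ∈ s, #{w ∈ s | G.Adj u w} + 1 ≤ #(M u)) :
    ∃ p, IsIndepSetDistrib H (s.biUnion M) p ∧
      ∀ u ∈ s, ∀ y ∈ M u, 1 / (#(M u) : ℝ) ≤ marginal p y := by
  induction s using Finset.strongInduction generalizing M with
  | H s ih =>
  obtain rfl | hs := s.eq_empty_or_nonempty
  · exact ⟨_, isIndepSetDistrib_indicator_empty H _, by simp⟩
  obtain ⟨v, hv, hmax⟩ := s.exists_max_image (fun u => #(M u)) hs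
  have hMv : (M v).Nonempty := card_pos.1 (by have := hdeg v hv; omega)
  have hσ (u : V) (hu : u ∈ s) (hvu : G.Adj v u) :=
    exists_injOn_mapsTo_of_adj hmatch hML hvu (hmax u hu)
  have : Nonempty W := ⟨hMv.choose⟩
  choose! σ hσinj hσmaps hσrel using hσ
  have hq (x : W) : ∃ q, IsIndepSetDistrib H ((s.erase v).biUnion (residualLists G M σ v x)) q ∧
      ∀ u ∈ s.erase v, ∀ y ∈ residualLists G M σ v x u,
        1 / (#(residualLists G M σ v x u) : ℝ) ≤ marginal q y :=
    ih _ (erase_ssubset hv) _ (fun u => residualLists_subset.trans (hML u)) fun u hu =>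
      card_filter_adj_erase_add_one_le_card_residualLists (hσinj u (mem_of_mem_erase hu)) hv
        (hdeg u (mem_of_mem_erase hu))
  choose q hq hq_marg using hq
  refine ⟨insertUniform (M v) q, IsIndepSetDistrib.insertUniform hMv (fun x _ => hq x) ?_ ?_, ?_⟩
  · intro x hx
    refine insert_subset (mem_biUnion.2 ⟨v, hv, hx⟩) ?_
    exact (biUnion_mono fun u _ => residualLists_subset).trans
      (biUnion_subset_biUnion_of_subset_left _ (erase_subset v s))
  · intro x hx t ht
    obtain ⟨u, hu, ht⟩ := mem_biUnion.1 ht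
    exact not_adj_of_mem_residualLists hnonadj hML (hσrel u (mem_of_mem_erase hu))
      (ne_of_mem_erase hu) hx ht
  intro u hu y hy
  obtain rfl | huv := eq_or_ne u v
  · exact inv_card_le_marginal_insertUniform (fun x _ => (hq x).nonneg)
      (fun x _ => (hq x).sum_eq_one) hy
  refine inv_card_le_marginal_insertUniform_residualLists hMv (fun x => (hq x).nonneg)
    (fun x => hq_marg x u (mem_erase.2 ⟨huv, hu⟩)) (hσinj u hu) (hσmaps u hu) (fun hvu => ?_) hy
  have : 0 < #{w ∈ s | G.Adj u w} := card_pos.2 ⟨v, mem_filter.2 ⟨hv, hvu.symm⟩⟩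
  have := hdeg u hu
  omega

/-- If `(L,H)` is a correspondence-cover of `G` with `|L v| ≥ deg v + 1` for all `v`,
then there is a probability distribution on independent sets `I` of `H` such that
`Pr(x ∈ I) ≥ 1/|L v|` for each `v` and each `x ∈ L v`. -/
theorem stmt15 {V W : Type*} [Fintype V] [Fintype W] [DecidableEq W]
    (G : SimpleGraph V) [DecidableRel G.Adj]
    (H : SimpleGraph W) (L : V → Finset W) (hcover : CorrCover G H L)
    (hsize : ∀ v : V, G.degree v + 1 ≤ (L v).card) :
    ∃ p : Finset W → ℝ,
      (∀ S : Finset W, 0 ≤ p S) ∧ (∑ S : Finset W, p S = 1) ∧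
      (∀ S : Finset W, 0 < p S → ∀ x ∈ S, ∀ y ∈ S, ¬ H.Adj x y) ∧
      (∀ v : V, ∀ x ∈ L v, 1 / ((L v).card : ℝ) ≤
        ∑ S ∈ univ.filter (fun S : Finset W => x ∈ S), p S) := by
  classical
  have hdeg (v : V) (_ : v ∈ univ) : #{w ∈ univ | G.Adj v w} + 1 ≤ #(L v) := by
    rw [← SimpleGraph.neighborFinset_eq_filter, SimpleGraph.card_neighborFinset_eq_degree]
    exact hsize v
  obtain ⟨p, hp, hmarg⟩ := exists_isIndepSetDistrib_inv_card_le_marginal hcover.nonadj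
    hcover.matching univ L le_rfl hdeg
  exact ⟨p, hp.nonneg, hp.sum_eq_one,
    fun S hS x hx y hy hxy => hp.isIndepSet S hS hx hy hxy.ne hxy,
    fun v x hx => hmarg v (mem_univ v) x hx⟩
end

section
/- For any graph G, the fractional correspondence packing number satisfies χ•_c(G) ≤ Δ(G) + 1, where Δ(G) is the maximum degree. -/
open Finset
open scoped BigOperators

theorem exists_distribution_of_forall_exists_le {W : Type*} [Fintype W] [DecidableEq W]
    (P : Finset W → Prop) (u : W → ℝ)
    (h : ∀ c : W → ℝ, ∃ S, P S ∧ ∑ x, c x * u x ≤ ∑ x ∈ S, c x) :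
    ∃ p : Finset W → ℝ, (∀ S, 0 ≤ p S) ∧ ∑ S, p S = 1 ∧ (∀ S, 0 < p S → P S) ∧
      ∀ x, ∑ S ∈ univ.filter (fun S => x ∈ S), p S = u x := by
  classical
  let ind : Finset W → W → ℝ := fun S x => if x ∈ S then 1 else 0
  have ind_injective : ind.Injective := fun S T hST => by
    ext x
    have hx := congr_fun hST x
    by_cases hS : x ∈ S <;> by_cases hT : x ∈ T <;> simp_all [ind]
  have hu : u ∈ convexHull ℝ (((univ.filter P).image ind : Finset (W → ℝ)) : Set (W → ℝ)) := by
    by_contra hu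
    obtain ⟨φ, r, hφ, hr⟩ := geometric_hahn_banach_closed_point (convex_convexHull ℝ _)
      ((Finset.finite_toSet _).isClosed_convexHull (𝕜 := ℝ)) hu
    set c : W → ℝ := fun x => φ fun y => if x = y then 1 else 0
    have hφc : ∀ v, φ v = ∑ x, c x * v x := fun v => by
      simpa [mul_comm] using LinearMap.pi_apply_eq_sum_univ φ.toLinearMap v
    obtain ⟨S, hS, hcS⟩ := h c
    have hφS := hφ (ind S) (subset_convexHull ℝ _ (by simpa using ⟨S, hS, rfl⟩))
    simp only [hφc, ind, mul_ite, mul_one, mul_zero, sum_ite_mem, univ_inter] at hφS hr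
    linarith
  obtain ⟨q, hq0, hq1, hqu⟩ := Finset.mem_convexHull'.1 hu
  rw [sum_image fun S _ T _ hST => ind_injective hST] at hq1 hqu
  refine ⟨fun S => if P S then q (ind S) else 0, fun S => ?_, ?_, fun S hS => ?_, fun x => ?_⟩
  · by_cases hS : P S
    · simpa [hS] using hq0 _ (mem_image_of_mem ind (by simpa using hS))
    · simp [hS]
  · rwa [← sum_filter]
  · by_contra hPS
    simp [hPS] at hS
  · rw [← hqu, Finset.sum_apply, sum_filter, sum_filter]
    refine sum_congr rfl fun S _ => ?_
    by_cases hxS : x ∈ S <;> by_cases hPS : P S <;> simp [ind, hxS, hPS]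

section Averaging

variable {α β : Type*}

structure InjExceptMin (w : β → ℝ) (P : Finset α) (Q : Finset β) (d : α → β) (m : β) : Prop where
  mem : m ∈ Q
  le : ∀ y ∈ Q, w m ≤ w y
  mapsTo : ∀ x ∈ P, d x ∈ Q
  injOn : Set.InjOn d {x | x ∈ P ∧ d x ≠ m}

variable {w : β → ℝ} {P : Finset α} {Q : Finset β} {d : α → β} {m : β}

lemma InjExceptMin.expect_comp_le (h : InjExceptMin w P Q d m) (hQP : #Q ≤ #P) :
    𝔼 x ∈ P, w (d x) ≤ 𝔼 y ∈ Q, w y := by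
  classical
  have hm : w m ≤ 𝔼 y ∈ Q, w y := le_expect ⟨m, h.mem⟩ h.le
  have hexcess : ∑ x ∈ P, (w (d x) - w m) ≤ ∑ y ∈ Q, (w y - w m) :=
    calc ∑ x ∈ P, (w (d x) - w m) = ∑ x ∈ P with d x ≠ m, (w (d x) - w m) :=
          (sum_filter_of_ne fun x _ hx => by rintro rfl; exact hx (sub_self _)).symm
      _ = ∑ y ∈ (P.filter (d · ≠ m)).image d, (w y - w m) :=
          (sum_image (f := fun y => w y - w m) fun x hx x' hx' =>
            h.injOn (by simpa using hx) (by simpa using hx')).symm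
      _ ≤ ∑ y ∈ Q, (w y - w m) :=
          sum_le_sum_of_subset_of_nonneg
            (image_subset_iff.2 fun x hx => h.mapsTo x (mem_filter.1 hx).1)
            fun y hy _ => sub_nonneg.2 (h.le y hy)
  rw [sum_sub_distrib, sum_sub_distrib, sum_const, sum_const, nsmul_eq_mul, nsmul_eq_mul,
    ← card_mul_expect Q w, ← card_mul_expect P] at hexcess
  have hQ : (0 : ℝ) < #Q := by exact_mod_cast card_pos.2 ⟨m, h.mem⟩
  have hQP' : (#Q : ℝ) ≤ #P := by exact_mod_cast hQP
  refine le_of_mul_le_mul_left ?_ (hQ.trans_le hQP')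
  nlinarith [mul_le_mul_of_nonneg_left hm (sub_nonneg.2 hQP')]

lemma InjExceptMin.expect_le_expect_expect_erase [DecidableEq β] (h : InjExceptMin w P Q d m)
    (hQP : #Q ≤ #P) (hQ : 2 ≤ #Q) :
    𝔼 y ∈ Q, w y ≤ 𝔼 x ∈ P, 𝔼 y ∈ Q.erase (d x), w y := by
  have hQ' : (0 : ℝ) < #Q - 1 := by
    have : (2 : ℝ) ≤ #Q := by exact_mod_cast hQ
    linarith
  have herase : ∀ x ∈ P,
      𝔼 y ∈ Q.erase (d x), w y = (#Q * 𝔼 y ∈ Q, w y - w (d x)) / (#Q - 1) := fun x hx => by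
    rw [expect_eq_sum_div_card, sum_erase_eq_sub (h.mapsTo x hx), card_erase_of_mem (h.mapsTo x hx),
      card_mul_expect, Nat.cast_sub (by omega), Nat.cast_one]
  rw [expect_congr rfl herase, ← expect_div, expect_sub_distrib,
    expect_const (card_pos.1 (by omega)), le_div_iff₀ hQ']
  linarith [h.expect_comp_le hQP]

end Averaging

section Transversal

variable {V W : Type*} (H : SimpleGraph W)

open Classical in
noncomputable def conflicts (A : Finset V) (L : V → Finset W) (v : V) : Finset V :=
  {u ∈ A | u ≠ v ∧ ∃ x ∈ L v, ∃ y ∈ L u, H.Adj x y}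

structure IsDegreeCover (A : Finset V) (L : V → Finset W) : Prop where
  adj_unique : ∀ u ∈ A, ∀ v ∈ A, u ≠ v → ∀ x ∈ L v, ∀ y₁ ∈ L u, ∀ y₂ ∈ L u,
    H.Adj x y₁ → H.Adj x y₂ → y₁ = y₂
  card_conflicts_lt : ∀ v ∈ A, #(conflicts H A L v) < #(L v)

structure IsIndepTransversal (A : Finset V) (L : V → Finset W) (f : V → W) : Prop where
  mem : ∀ v ∈ A, f v ∈ L v
  not_adj : ∀ u ∈ A, ∀ v ∈ A, u ≠ v → ¬ H.Adj (f u) (f v)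

def eraseOn [DecidableEq V] [DecidableEq W] (C : Finset V) (L : V → Finset W) (e : V → W)
    (u : V) : Finset W :=
  if u ∈ C then (L u).erase (e u) else L u

variable {H} {A : Finset V} {L : V → Finset W} {u v : V}

lemma mem_conflicts :
    u ∈ conflicts H A L v ↔ u ∈ A ∧ u ≠ v ∧ ∃ x ∈ L v, ∃ y ∈ L u, H.Adj x y := by
  simp [conflicts]

lemma mem_conflicts_comm (hv : v ∈ A) (hu : u ∈ conflicts H A L v) : v ∈ conflicts H A L u := by
  obtain ⟨huA, hne, x, hx, y, hy, hxy⟩ := mem_conflicts.1 hu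
  exact mem_conflicts.2 ⟨hv, hne.symm, y, hy, x, hx, hxy.symm⟩

lemma conflicts_mono {A' : Finset V} {L' : V → Finset W} (hA : A' ⊆ A) (hL : ∀ u, L' u ⊆ L u) :
    conflicts H A' L' v ⊆ conflicts H A L v := fun u hu => by
  obtain ⟨huA, hne, x, hx, y, hy, hxy⟩ := mem_conflicts.1 hu
  exact mem_conflicts.2 ⟨hA huA, hne, x, hL v hx, y, hL u hy, hxy⟩

lemma IsDegreeCover.nonempty (hL : IsDegreeCover H A L) (hv : v ∈ A) : (L v).Nonempty :=
  card_pos.1 ((Nat.zero_le _).trans_lt (hL.card_conflicts_lt v hv))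

lemma eraseOn_subset [DecidableEq V] [DecidableEq W] (C : Finset V) (L : V → Finset W)
    (e : V → W) (u : V) : eraseOn C L e u ⊆ L u := by
  unfold eraseOn
  split_ifs
  exacts [erase_subset _ _, subset_rfl]

lemma exists_injExceptMin (w : W → ℝ) {P Q : Finset W} (hQ : Q.Nonempty)
    (hP : ∀ y ∈ Q, ∀ x₁ ∈ P, ∀ x₂ ∈ P, H.Adj y x₁ → H.Adj y x₂ → x₁ = x₂)
    (hQ' : ∀ x ∈ P, ∀ y₁ ∈ Q, ∀ y₂ ∈ Q, H.Adj x y₁ → H.Adj x y₂ → y₁ = y₂) :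
    ∃ d m, InjExceptMin w P Q d m ∧ ∀ x ∈ P, ∀ y ∈ Q, H.Adj x y → d x = y := by
  classical
  obtain ⟨m, hm, hmin⟩ := Q.exists_min_image w hQ
  let d x := if h : ∃ y ∈ Q, H.Adj x y then h.choose else m
  have hd_adj : ∀ x, (h : ∃ y ∈ Q, H.Adj x y) → d x ∈ Q ∧ H.Adj x (d x) := fun x h => by
    simp only [d, dif_pos h]
    exact h.choose_spec
  have hd_eq : ∀ x, (¬ ∃ y ∈ Q, H.Adj x y) → d x = m := fun x h => by simp only [d, dif_neg h]
  refine ⟨d, m, ⟨hm, hmin, fun x _ => ?_, fun x hx x' hx' hxx' => ?_⟩, fun x hx y hy hxy => ?_⟩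
  · by_cases h : ∃ y ∈ Q, H.Adj x y
    · exact (hd_adj x h).1
    · rw [hd_eq x h]; exact hm
  · have hmatched : ∀ x, d x ≠ m → ∃ y ∈ Q, H.Adj x y := fun x hx => by
      by_contra h
      exact hx (hd_eq x h)
    obtain ⟨hdx, hadj⟩ := hd_adj x (hmatched x hx.2)
    obtain ⟨-, hadj'⟩ := hd_adj x' (hmatched x' hx'.2)
    rw [← hxx'] at hadj'
    exact hP _ hdx x hx.1 x' hx'.1 hadj.symm hadj'.symm
  · obtain ⟨hdx, hadj⟩ := hd_adj x ⟨y, hy, hxy⟩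
    exact hQ' x hx _ hdx y hy hadj hxy

lemma IsDegreeCover.erase [DecidableEq V] [DecidableEq W] (hL : IsDegreeCover H A L)
    (hv : v ∈ A) (e : V → W) (he : ∀ u ∈ conflicts H A L v, e u ∈ L u) :
    IsDegreeCover H (A.erase v) (eraseOn (conflicts H A L v) L e) where
  adj_unique u hu u' hu' huu' x hx y₁ hy₁ y₂ hy₂ :=
    hL.adj_unique u (mem_of_mem_erase hu) u' (mem_of_mem_erase hu') huu' x
      (eraseOn_subset _ _ _ _ hx) y₁ (eraseOn_subset _ _ _ _ hy₁) y₂ (eraseOn_subset _ _ _ _ hy₂)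
  card_conflicts_lt u hu := by
    have hsub : conflicts H (A.erase v) (eraseOn (conflicts H A L v) L e) u ⊆
        (conflicts H A L u).erase v := fun u' hu' =>
      mem_erase.2 ⟨ne_of_mem_erase (mem_conflicts.1 hu').1,
        conflicts_mono (erase_subset _ _) (eraseOn_subset _ _ _) hu'⟩
    have hlt := hL.card_conflicts_lt u (mem_of_mem_erase hu)
    refine (card_le_card hsub).trans_lt ?_
    by_cases huC : u ∈ conflicts H A L v
    · have hvu := mem_conflicts_comm hv huC
      have := card_pos.2 ⟨v, hvu⟩
      rw [eraseOn, if_pos huC, card_erase_of_mem (he u huC), card_erase_of_mem hvu]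
      omega
    · rw [eraseOn, if_neg huC]
      exact card_erase_le.trans_lt hlt

lemma IsDegreeCover.exists_le_add_sum_expect_eraseOn [DecidableEq V] [DecidableEq W]
    (w : W → ℝ) (hL : IsDegreeCover H A L) (hv : v ∈ A) (hmax : ∀ u ∈ A, #(L u) ≤ #(L v))
    {d : V → W → W} {m : V → W}
    (hd : ∀ u ∈ conflicts H A L v, InjExceptMin w (L v) (L u) (d u) (m u)) :
    ∃ x ∈ L v, ∑ u ∈ A, 𝔼 y ∈ L u, w y ≤
      w x + ∑ u ∈ A.erase v, 𝔼 y ∈ eraseOn (conflicts H A L v) L (d · x) u, w y := by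
  have hLv := hL.nonempty hv
  apply exists_le_of_le_expect hLv
  rw [expect_add_distrib, expect_sum_comm, ← add_sum_erase A _ hv]
  gcongr with u hu
  by_cases huC : u ∈ conflicts H A L v
  · simp only [eraseOn, if_pos huC]
    refine (hd u huC).expect_le_expect_expect_erase (hmax u (mem_of_mem_erase hu)) ?_
    have := hL.card_conflicts_lt u (mem_of_mem_erase hu)
    have := card_pos.2 ⟨v, mem_conflicts_comm hv huC⟩
    omega
  · simp [eraseOn, huC, expect_const hLv]

lemma IsIndepTransversal.update [DecidableEq V] {L' : V → Finset W} {f : V → W} {x : W}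
    (hf : IsIndepTransversal H (A.erase v) L' f) (hL' : ∀ u, L' u ⊆ L u) (hx : x ∈ L v)
    (hx_indep : ∀ u ∈ A.erase v, ¬ H.Adj x (f u)) :
    IsIndepTransversal H A L (Function.update f v x) where
  mem u hu := by
    rcases eq_or_ne u v with rfl | huv
    · simpa using hx
    · simpa [huv] using hL' u (hf.mem u (mem_erase.2 ⟨huv, hu⟩))
  not_adj u hu u' hu' hne := by
    rcases eq_or_ne u v with rfl | huv
    · simpa [hne.symm] using hx_indep u' (mem_erase.2 ⟨hne.symm, hu'⟩)
    rcases eq_or_ne u' v with rfl | hu'v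
    · simpa [huv] using fun h => hx_indep u (mem_erase.2 ⟨huv, hu⟩) h.symm
    · simpa [huv, hu'v] using hf.not_adj u (mem_erase.2 ⟨huv, hu⟩) u' (mem_erase.2 ⟨hu'v, hu'⟩) hne

theorem IsDegreeCover.exists_isIndepTransversal [DecidableEq V] [DecidableEq W] [Nonempty W]
    (w : W → ℝ) (hL : IsDegreeCover H A L) :
    ∃ f, IsIndepTransversal H A L f ∧ ∑ v ∈ A, 𝔼 y ∈ L v, w y ≤ ∑ v ∈ A, w (f v) := by
  induction A using Finset.strongInduction generalizing L with
  | H A ih =>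
  rcases A.eq_empty_or_nonempty with rfl | hA
  · exact ⟨fun _ => Classical.arbitrary W, ⟨by simp, by simp⟩, by simp⟩
  obtain ⟨v, hv, hmax⟩ := A.exists_max_image (fun u => #(L u)) hA
  have hdel : ∀ u ∈ conflicts H A L v, ∃ d m, InjExceptMin w (L v) (L u) d m ∧
      ∀ x ∈ L v, ∀ y ∈ L u, H.Adj x y → d x = y := fun u hu => by
    obtain ⟨huA, hne, -⟩ := mem_conflicts.1 hu
    exact exists_injExceptMin w (hL.nonempty huA) (hL.adj_unique v hv u huA hne.symm)
      (hL.adj_unique u huA v hv hne)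
  choose! d m hdm hd_adj using hdel
  obtain ⟨x, hx, hchoice⟩ := hL.exists_le_add_sum_expect_eraseOn w hv hmax hdm
  obtain ⟨f, hf, hfw⟩ :=
    ih _ (erase_ssubset hv) (hL.erase hv (d · x) fun u hu => (hdm u hu).mapsTo x hx)
  have hx_indep : ∀ u ∈ A.erase v, ¬ H.Adj x (f u) := fun u hu hxu => by
    have hfu := hf.mem u hu
    have huC : u ∈ conflicts H A L v := mem_conflicts.2
      ⟨mem_of_mem_erase hu, ne_of_mem_erase hu, x, hx, f u, eraseOn_subset _ _ _ _ hfu, hxu⟩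
    simp only [eraseOn, if_pos huC] at hfu
    exact (mem_erase.1 hfu).1 (hd_adj u huC x hx _ (mem_erase.1 hfu).2 hxu).symm
  refine ⟨Function.update f v x, hf.update (eraseOn_subset _ _ _) hx hx_indep, ?_⟩
  calc ∑ u ∈ A, 𝔼 y ∈ L u, w y
      ≤ w x + ∑ u ∈ A.erase v, 𝔼 y ∈ eraseOn (conflicts H A L v) L (d · x) u, w y := hchoice
    _ ≤ w x + ∑ u ∈ A.erase v, w (f u) := by linarith
    _ = ∑ u ∈ A, w (Function.update f v x u) := by
        rw [← add_sum_erase A _ hv, Function.update_self]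
        congr 1
        exact sum_congr rfl fun u hu => by rw [Function.update_of_ne (ne_of_mem_erase hu)]

end Transversal

section CorrCover

variable {V W : Type*} {G : SimpleGraph V} {H : SimpleGraph W} {L : V → Finset W}

lemma CorrCover.isDegreeCover [Fintype V] [DecidableRel G.Adj] (hcover : CorrCover G H L)
    (hdeg : ∀ v, G.degree v < #(L v)) : IsDegreeCover H univ L where
  adj_unique u _ v _ huv x hx y₁ hy₁ y₂ hy₂ hxy₁ hxy₂ := by
    by_cases hvu : G.Adj v u
    · exact hcover.matching v u hvu x hx y₁ hy₁ y₂ hy₂ hxy₁ hxy₂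
    · exact absurd hxy₁ (hcover.nonadj v u huv.symm hvu x hx y₁ hy₁)
  card_conflicts_lt v _ := by
    refine (card_le_card fun u hu => ?_).trans_lt (hdeg v)
    obtain ⟨-, huv, x, hx, y, hy, hxy⟩ := mem_conflicts.1 hu
    rw [SimpleGraph.mem_neighborFinset]
    by_contra hvu
    exact hcover.nonadj v u huv.symm hvu x hx y hy hxy

lemma CorrCover.sum_eq_sum_sum [Fintype V] [Fintype W] {M : Type*} [AddCommMonoid M]
    (hcover : CorrCover G H L) (g : W → M) : ∑ x, g x = ∑ v, ∑ x ∈ L v, g x := by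
  classical
  rw [← sum_biUnion fun u _ v _ huv =>
    disjoint_left.2 fun x hxu hxv => huv ((hcover.partition x).unique hxu hxv)]
  congr
  ext x
  simpa using (hcover.partition x).exists

lemma CorrCover.exists_indep_sum_expect_le [Fintype V] [DecidableRel G.Adj]
    (hcover : CorrCover G H L) (hdeg : ∀ v, G.degree v < #(L v)) (c : W → ℝ) :
    ∃ S : Finset W, (∀ x ∈ S, ∀ y ∈ S, ¬ H.Adj x y) ∧ ∑ v, 𝔼 x ∈ L v, c x ≤ ∑ x ∈ S, c x := by
  classical
  cases isEmpty_or_nonempty W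
  · exact ⟨∅, by simp, by simp [eq_empty_of_isEmpty]⟩
  obtain ⟨f, hf, hfc⟩ := (hcover.isDegreeCover hdeg).exists_isIndepTransversal c
  have hf_inj : f.Injective := fun u v huv =>
    (hcover.partition (f u)).unique (hf.mem u (mem_univ u)) (huv ▸ hf.mem v (mem_univ v))
  refine ⟨univ.image f, ?_, ?_⟩
  · simp only [mem_image, mem_univ, true_and]
    rintro _ ⟨u, rfl⟩ _ ⟨v, rfl⟩
    rcases eq_or_ne u v with rfl | huv
    · exact H.loopless.irrefl _
    · exact hf.not_adj u (mem_univ u) v (mem_univ v) huv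
  · rwa [sum_image fun u _ v _ huv => hf_inj huv]

end CorrCover

/-- Fractional correspondence packing number is at most `Δ(G) + 1`: every
`(Δ(G)+1)`-fold correspondence-cover `(L,H)` of `G` has fractional chromatic
number `Δ(G)+1`, witnessed by a probability distribution on independent sets of
`H` covering each cover vertex with probability at least `1/(Δ(G)+1)`. -/
theorem stmt16 {V W : Type*} [Fintype V] [Fintype W] [DecidableEq W]
    (G : SimpleGraph V) [DecidableRel G.Adj]
    (H : SimpleGraph W) (L : V → Finset W) (hcover : CorrCover G H L)
    (hfold : ∀ v : V, (L v).card = G.maxDegree + 1) :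
    ∃ p : Finset W → ℝ,
      (∀ S : Finset W, 0 ≤ p S) ∧ (∑ S : Finset W, p S = 1) ∧
      (∀ S : Finset W, 0 < p S → ∀ x ∈ S, ∀ y ∈ S, ¬ H.Adj x y) ∧
      (∀ x : W, 1 / ((G.maxDegree : ℝ) + 1) ≤
        ∑ S ∈ univ.filter (fun S : Finset W => x ∈ S), p S) := by
  have hdeg : ∀ v, G.degree v < #(L v) := fun v => by
    rw [hfold]
    exact Nat.lt_succ_of_le (G.degree_le_maxDegree v)
  obtain ⟨p, hp0, hp1, hp_indep, hp_cover⟩ := exists_distribution_of_forall_exists_le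
    (fun S => ∀ x ∈ S, ∀ y ∈ S, ¬ H.Adj x y) (fun _ => 1 / ((G.maxDegree : ℝ) + 1)) fun c => by
      obtain ⟨S, hS, hcS⟩ := hcover.exists_indep_sum_expect_le hdeg c
      refine ⟨S, hS, le_of_eq_of_le ?_ hcS⟩
      rw [← sum_mul, hcover.sum_eq_sum_sum, sum_mul]
      refine sum_congr rfl fun v _ => ?_
      rw [expect_eq_sum_div_card, hfold]
      push_cast
      ring
  exact ⟨p, hp0, hp1, hp_indep, fun x => (hp_cover x).ge⟩
end

section
/- Let G = (A ∪ B, E) be a bipartite graph where every vertex of A has degree at most Δ_A. Let (L,H) be a (Δ_A+1)-fold correspondence-cover of G in which the matching between L(u) and L(v) is perfect for each edge uv. Choose independently for each b ∈ B a uniformly random x_b ∈ L(b), and then for each a ∈ A a uniformly random element of L(a) not adjacent in H to any chosen x_b (such an element exists). The resulting random set I is an independent set of H containing exactly one vertex of each list, and every vertex of H lies in I with probability exactly 1/(Δ_A+1). Consequently χ_f(H) ≤ Δ_A + 1. -/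
/-!
Choose `x_b` uniformly in `L b` for every `b ∈ B`, then `x_a` uniformly among the colours of
`L a` not matched to any chosen `x_b`; at most `Δ_A` of its `Δ_A + 1` colours are excluded. An
edge of `H` inside the chosen set would join two lists on the same side (impossible by
bipartiteness), lists of non-adjacent vertices (impossible in a cover), or some `x_a` to the
`x_b` matched to it, which was excluded.

Each `x_b` is uniform on `L b`. For `x_a`, a permutation `σ` of `L a` lifts through the
matchings to a bijection of the choices `(x_b)_b`: for each neighbour `b` of `a`, replace `x_b`
by the colour of `L b` matched to `σ` of the partner of `x_b` in `L a`. This bijection preserves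
the law of `(x_b)_b` and moves the excluded colours of `a` by `σ`, so the law of `x_a` is
invariant under the permutations of `L a`, i.e. uniform.
-/

open Finset
open scoped Pointwise

section UniformWeight

variable {α : Type*} [DecidableEq α] {s t : Finset α} {x : α}

noncomputable def uniformWeight (s : Finset α) (x : α) : ℝ :=
  if x ∈ s then (#s : ℝ)⁻¹ else 0

lemma uniformWeight_nonneg : 0 ≤ uniformWeight s x := by
  unfold uniformWeight; positivity

lemma mem_of_uniformWeight_ne_zero (h : uniformWeight s x ≠ 0) : x ∈ s := by
  by_contra hx
  exact h (if_neg hx)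

lemma uniformWeight_congr {y : α} (h : x ∈ s ↔ y ∈ s) :
    uniformWeight s x = uniformWeight s y := by
  simp only [uniformWeight, h]

lemma sum_uniformWeight_of_subset (hst : s ⊆ t) (hs : s.Nonempty) :
    ∑ x ∈ t, uniformWeight s x = 1 := by
  simp only [uniformWeight]
  rw [sum_ite_mem, inter_eq_right.2 hst, sum_const, nsmul_eq_mul]
  exact mul_inv_cancel₀ (by exact_mod_cast hs.card_pos.ne')

lemma uniformWeight_image_perm (σ : Equiv.Perm α) :
    uniformWeight (s.image σ) (σ x) = uniformWeight s x := by
  simp only [uniformWeight, σ.injective.mem_finset_image, card_image_of_injective _ σ.injective]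

end UniformWeight

section ProductWeight

variable {α ι : Type*} [Fintype α] [Fintype ι] [DecidableEq ι] {g : ι → α → ℝ}

lemma sum_prod_eq_one (hg : ∀ i, ∑ a, g i a = 1) : ∑ c : ι → α, ∏ i, g i (c i) = 1 := by
  rw [← Fintype.prod_sum]
  exact prod_eq_one fun i _ => hg i

lemma sum_prod_of_apply_eq [DecidableEq α] (hg : ∀ i, ∑ a, g i a = 1) (i₀ : ι) (x : α) :
    ∑ c : ι → α, (if c i₀ = x then ∏ i, g i (c i) else 0) = g i₀ x := by
  set g' : ι → α → ℝ := fun i a => if i = i₀ ∧ a ≠ x then 0 else g i a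
  have hfactor : ∀ c : ι → α,
      (if c i₀ = x then ∏ i, g i (c i) else 0) = ∏ i, g' i (c i) := by
    intro c
    split_ifs with hc
    · refine prod_congr rfl fun i _ => ?_
      simp only [g']
      rw [if_neg]
      rintro ⟨rfl, hne⟩
      exact hne hc
    · exact (prod_eq_zero (mem_univ i₀) (by simp [g', hc])).symm
  rw [sum_congr rfl fun c _ => hfactor c, ← Fintype.prod_sum, prod_eq_single i₀]
  · simp [g']
  · intro i _ hi
    simp [g', hi, hg i]
  · simp

end ProductWeight

section Partner

variable {V W : Type*} {G : SimpleGraph V} {H : SimpleGraph W} {L : V → Finset W}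

variable (H L) in
open Classical in
noncomputable def partner (v : V) (x : W) : W :=
  if h : ∃ y ∈ L v, H.Adj x y then h.choose else x

variable (hperfect : ∀ u v : V, G.Adj u v → ∀ x ∈ L u, ∃ y ∈ L v, H.Adj x y)
  {u v : V} {x y : W}

include hperfect in
lemma partner_spec (huv : G.Adj u v) (hx : x ∈ L u) :
    partner H L v x ∈ L v ∧ H.Adj x (partner H L v x) := by
  have hex := hperfect u v huv x hx
  rw [partner, dif_pos hex]
  exact hex.choose_spec

include hperfect in
lemma eq_partner (hcover : CorrCover G H L) (huv : G.Adj u v) (hx : x ∈ L u) (hy : y ∈ L v)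
    (hxy : H.Adj x y) : y = partner H L v x :=
  have h := partner_spec hperfect huv hx
  hcover.matching u v huv x hx y hy _ h.1 hxy h.2

include hperfect in
lemma partner_partner (hcover : CorrCover G H L) (huv : G.Adj u v) (hx : x ∈ L u) :
    partner H L u (partner H L v x) = x :=
  have h := partner_spec hperfect huv hx
  (eq_partner hperfect hcover huv.symm h.1 hx h.2.symm).symm

end Partner

section Partition

variable {V W : Type*} [Fintype V] [DecidableEq W] {L : V → Finset W}
  (hL : ∀ w, ∃! v, w ∈ L v) {f : V → W} (hf : ∀ v, f v ∈ L v)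

include hL hf in
lemma mem_image_iff_apply_eq {v : V} {x : W} (hx : x ∈ L v) : x ∈ univ.image f ↔ f v = x := by
  refine ⟨fun h => ?_, fun h => h ▸ mem_image_of_mem f (mem_univ v)⟩
  obtain ⟨u, -, rfl⟩ := mem_image.1 h
  rw [(hL (f u)).unique hx (hf u)]

include hL hf in
lemma image_inter_eq_singleton (v : V) : univ.image f ∩ L v = {f v} := by
  ext x
  rw [mem_inter, mem_singleton]
  exact ⟨fun ⟨hx, hxv⟩ => ((mem_image_iff_apply_eq hL hf hxv).1 hx).symm,
    fun h => h ▸ ⟨mem_image_of_mem f (mem_univ v), hf v⟩⟩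

end Partition

section Sampling

variable {A B W : Type*} [Fintype B] [DecidableEq W]
  (G : SimpleGraph (A ⊕ B)) [DecidableRel G.Adj] (H : SimpleGraph W) (L : A ⊕ B → Finset W)

def neighborsRight (a : A) : Finset B := {b | G.Adj (.inl a) (.inr b)}

noncomputable def forbidden (a : A) (c : B → W) : Finset W :=
  (neighborsRight G a).image fun b => partner H L (.inl a) (c b)

noncomputable def available (a : A) (c : B → W) : Finset W :=
  L (.inl a) \ forbidden G H L a c

noncomputable def rightWeight (c : B → W) : ℝ :=
  ∏ b, uniformWeight (L (.inr b)) (c b)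

variable {G H L}

lemma mem_of_rightWeight_ne_zero {c : B → W} (h : rightWeight L c ≠ 0) (b : B) :
    c b ∈ L (.inr b) :=
  mem_of_uniformWeight_ne_zero ((prod_ne_zero_iff.1 h) b (mem_univ b))

lemma rightWeight_mul_congr {c : B → W} {r s : ℝ} (h : (∀ b, c b ∈ L (.inr b)) → r = s) :
    rightWeight L c * r = rightWeight L c * s := by
  by_cases hc : ∀ b, c b ∈ L (.inr b)
  · rw [h hc]
  · have h0 : rightWeight L c = 0 := by_contra fun h0 => hc (mem_of_rightWeight_ne_zero h0)
    rw [h0, zero_mul, zero_mul]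

lemma sum_rightWeight [Fintype W] [DecidableEq B] {n : ℕ} (hfold : ∀ b, #(L (.inr b)) = n + 1) :
    ∑ c, rightWeight L c = 1 :=
  sum_prod_eq_one fun b =>
    sum_uniformWeight_of_subset (subset_univ _) (card_pos.1 (by rw [hfold]; omega))

variable (hperfect : ∀ u v : A ⊕ B, G.Adj u v → ∀ x ∈ L u, ∃ y ∈ L v, H.Adj x y)

include hperfect in
lemma forbidden_subset {a : A} {c : B → W} (hc : ∀ b, c b ∈ L (.inr b)) :
    forbidden G H L a c ⊆ L (.inl a) := by
  intro z hz
  obtain ⟨b, hb, rfl⟩ := mem_image.1 hz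
  exact (partner_spec hperfect (mem_filter.1 hb).2.symm (hc b)).1

variable [Fintype A]

variable (G H L) in
noncomputable def leftWeight (c : B → W) (d : A → W) : ℝ :=
  ∏ a, uniformWeight (available G H L a c) (d a)

-- The probability that the procedure picks `x_b = ω.1 b` and `x_a = ω.2 a` for all `a`, `b`.
variable (G H L) in
noncomputable def weight (ω : (B → W) × (A → W)) : ℝ :=
  rightWeight L ω.1 * leftWeight G H L ω.1 ω.2

lemma card_neighborsRight_le (a : A) : #(neighborsRight G a) ≤ G.degree (.inl a) := by
  rw [← SimpleGraph.card_neighborFinset_eq_degree]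
  refine card_le_card_of_injOn Sum.inr (fun b hb => ?_) Sum.inr_injective.injOn
  simpa [neighborsRight] using hb

lemma weight_nonneg (ω : (B → W) × (A → W)) : 0 ≤ weight G H L ω :=
  mul_nonneg (prod_nonneg fun _ _ => uniformWeight_nonneg)
    (prod_nonneg fun _ _ => uniformWeight_nonneg)

lemma mem_of_leftWeight_ne_zero {c : B → W} {d : A → W} (h : leftWeight G H L c d ≠ 0)
    (a : A) : d a ∈ available G H L a c :=
  mem_of_uniformWeight_ne_zero ((prod_ne_zero_iff.1 h) a (mem_univ a))

variable {ΔA : ℕ} (hdeg : ∀ a : A, G.degree (Sum.inl a) ≤ ΔA)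
  (hfold : ∀ v : A ⊕ B, (L v).card = ΔA + 1)

include hperfect hdeg hfold in
lemma available_nonempty {c : B → W} (hc : ∀ b, c b ∈ L (.inr b)) (a : A) :
    (available G H L a c).Nonempty := by
  have hcard : #(forbidden G H L a c) ≤ ΔA :=
    card_image_le.trans ((card_neighborsRight_le a).trans (hdeg a))
  rw [← card_pos, available, card_sdiff_of_subset (forbidden_subset hperfect hc), hfold]
  omega

variable [Fintype W] [DecidableEq A]

include hperfect hdeg hfold in
lemma sum_leftWeight {c : B → W} (hc : ∀ b, c b ∈ L (.inr b)) :
    ∑ d, leftWeight G H L c d = 1 :=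
  sum_prod_eq_one fun a =>
    sum_uniformWeight_of_subset (subset_univ _) (available_nonempty hperfect hdeg hfold hc a)

variable [DecidableEq B]

include hperfect hdeg hfold in
lemma sum_weight : ∑ ω, weight G H L ω = 1 := by
  simp only [weight, Fintype.sum_prod_type, ← mul_sum]
  rw [← sum_rightWeight (fun b => hfold (.inr b))]
  refine sum_congr rfl fun c _ => ?_
  rw [rightWeight_mul_congr (s := 1) (sum_leftWeight hperfect hdeg hfold), mul_one]

include hperfect hdeg hfold in
lemma sum_weight_of_apply_right_eq {b₀ : B} {x : W} (hx : x ∈ L (.inr b₀)) :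
    ∑ ω, (if ω.1 b₀ = x then weight G H L ω else 0) = ((ΔA : ℝ) + 1)⁻¹ := by
  calc ∑ ω, (if ω.1 b₀ = x then weight G H L ω else 0)
      = ∑ c, if c b₀ = x then rightWeight L c * ∑ d, leftWeight G H L c d else 0 := by
        rw [Fintype.sum_prod_type]
        refine sum_congr rfl fun c _ => ?_
        split_ifs <;> simp [weight, mul_sum]
    _ = ∑ c, if c b₀ = x then rightWeight L c else 0 := by
        refine sum_congr rfl fun c _ => ?_
        rw [rightWeight_mul_congr (s := 1) (sum_leftWeight hperfect hdeg hfold), mul_one]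
    _ = uniformWeight (L (.inr b₀)) x :=
        sum_prod_of_apply_eq (fun b => sum_uniformWeight_of_subset (subset_univ _)
          (card_pos.1 (by rw [hfold]; omega))) b₀ x
    _ = ((ΔA : ℝ) + 1)⁻¹ := by
        rw [uniformWeight, if_pos hx, hfold]
        push_cast
        rfl

include hperfect hdeg hfold in
lemma sum_weight_of_apply_left_eq (a₀ : A) (x : W) :
    ∑ ω, (if ω.2 a₀ = x then weight G H L ω else 0)
      = ∑ c, rightWeight L c * uniformWeight (available G H L a₀ c) x := by
  rw [Fintype.sum_prod_type]
  refine sum_congr rfl fun c _ => ?_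
  have hfactor : ∑ d, (if d a₀ = x then weight G H L (c, d) else 0)
      = rightWeight L c * ∑ d, if d a₀ = x then leftWeight G H L c d else 0 := by
    rw [mul_sum]
    exact sum_congr rfl fun d _ => by split_ifs <;> simp [weight]
  rw [hfactor]
  refine rightWeight_mul_congr fun hc => ?_
  exact sum_prod_of_apply_eq (fun a => sum_uniformWeight_of_subset (subset_univ _)
    (available_nonempty hperfect hdeg hfold hc a)) a₀ x

end Sampling

lemma Finset.image_eq_self_of_mem_stabilizer {α : Type*} [DecidableEq α] {s : Finset α}
    {σ : Equiv.Perm α} (hσ : σ ∈ MulAction.stabilizer (Equiv.Perm α) (s : Set α)) :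
    s.image σ = s :=
  eq_of_subset_of_card_le
    (image_subset_iff.2 fun w hw => (MulAction.mem_stabilizer_set.1 hσ w).2 hw)
    (card_image_of_injective _ σ.injective).ge

section Relabel

variable {A B W : Type*} [DecidableEq W] {G : SimpleGraph (A ⊕ B)} [DecidableRel G.Adj]
  {H : SimpleGraph W} {L : A ⊕ B → Finset W}

-- The identity off the lists, so that it is a bijection of all of `B → W`.
variable (G H L) in
noncomputable def relabel (a₀ : A) (σ : Equiv.Perm W) (c : B → W) : B → W := fun b =>
  if G.Adj (.inl a₀) (.inr b) ∧ c b ∈ L (.inr b) then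
    partner H L (.inr b) (σ (partner H L (.inl a₀) (c b)))
  else c b

variable (hperfect : ∀ u v : A ⊕ B, G.Adj u v → ∀ x ∈ L u, ∃ y ∈ L v, H.Adj x y)
  (hcover : CorrCover G H L) {a₀ : A} {σ : Equiv.Perm W}
  (hσ : σ ∈ MulAction.stabilizer (Equiv.Perm W) (L (.inl a₀) : Set W))

include hperfect hcover hσ in
lemma relabel_spec {c : B → W} {b : B} (hb : G.Adj (.inl a₀) (.inr b))
    (hcb : c b ∈ L (.inr b)) :
    relabel G H L a₀ σ c b ∈ L (.inr b) ∧
      partner H L (.inl a₀) (relabel G H L a₀ σ c b) = σ (partner H L (.inl a₀) (c b)) := by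
  have hσm : σ (partner H L (.inl a₀) (c b)) ∈ L (.inl a₀) :=
    (MulAction.mem_stabilizer_set.1 hσ _).2 (partner_spec hperfect hb.symm hcb).1
  rw [relabel, if_pos ⟨hb, hcb⟩]
  exact ⟨(partner_spec hperfect hb hσm).1, partner_partner hperfect hcover hb hσm⟩

include hperfect hcover hσ in
lemma relabel_mem_iff (c : B → W) (b : B) :
    relabel G H L a₀ σ c b ∈ L (.inr b) ↔ c b ∈ L (.inr b) := by
  by_cases h : G.Adj (.inl a₀) (.inr b) ∧ c b ∈ L (.inr b)
  · exact iff_of_true (relabel_spec hperfect hcover hσ h.1 h.2).1 h.2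
  · rw [relabel, if_neg h]

include hperfect hcover hσ in
lemma relabel_inv_relabel (c : B → W) :
    relabel G H L a₀ σ⁻¹ (relabel G H L a₀ σ c) = c := by
  funext b
  by_cases h : G.Adj (.inl a₀) (.inr b) ∧ c b ∈ L (.inr b)
  · have hs := relabel_spec hperfect hcover hσ h.1 h.2
    rw [relabel, if_pos ⟨h.1, hs.1⟩, hs.2, Equiv.Perm.coe_inv, Equiv.symm_apply_apply,
      partner_partner hperfect hcover h.1.symm h.2]
  · have h' : ¬ (G.Adj (.inl a₀) (.inr b) ∧ relabel G H L a₀ σ c b ∈ L (.inr b)) := by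
      rwa [relabel_mem_iff hperfect hcover hσ]
    rw [relabel, if_neg h', relabel, if_neg h]

noncomputable def relabelPerm : Equiv.Perm (B → W) where
  toFun := relabel G H L a₀ σ
  invFun := relabel G H L a₀ σ⁻¹
  left_inv := relabel_inv_relabel hperfect hcover hσ
  right_inv c := by
    simpa using relabel_inv_relabel hperfect hcover (inv_mem hσ) c

variable [Fintype B]

include hperfect hcover hσ in
lemma rightWeight_relabel (c : B → W) :
    rightWeight L (relabel G H L a₀ σ c) = rightWeight L c :=
  prod_congr rfl fun b _ => uniformWeight_congr (relabel_mem_iff hperfect hcover hσ c b)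

include hperfect hcover hσ in
lemma available_relabel {c : B → W} (hc : ∀ b, c b ∈ L (.inr b)) :
    available G H L a₀ (relabel G H L a₀ σ c) = (available G H L a₀ c).image σ := by
  have hforbidden :
      forbidden G H L a₀ (relabel G H L a₀ σ c) = (forbidden G H L a₀ c).image σ := by
    rw [forbidden, forbidden, image_image]
    exact image_congr fun b hb =>
      (relabel_spec hperfect hcover hσ (mem_filter.1 hb).2 (hc b)).2
  rw [available, available, image_sdiff _ _ σ.injective, hforbidden,
    image_eq_self_of_mem_stabilizer hσ]

include hperfect hcover hσ in
lemma sum_rightWeight_mul_uniformWeight_perm [Fintype W] [DecidableEq B] (z : W) :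
    ∑ c, rightWeight L c * uniformWeight (available G H L a₀ c) (σ z)
      = ∑ c, rightWeight L c * uniformWeight (available G H L a₀ c) z := by
  refine (Fintype.sum_equiv (relabelPerm hperfect hcover hσ) _ _ fun c => ?_).symm
  rw [show relabelPerm hperfect hcover hσ c = relabel G H L a₀ σ c from rfl]
  rw [rightWeight_relabel hperfect hcover hσ]
  refine rightWeight_mul_congr fun hc => ?_
  rw [available_relabel hperfect hcover hσ hc, uniformWeight_image_perm]

end Relabel

section Packing

variable {A B W : Type*} [Fintype A] [Fintype B] [DecidableEq W]
  {G : SimpleGraph (A ⊕ B)} [DecidableRel G.Adj] {H : SimpleGraph W} {L : A ⊕ B → Finset W}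
  {ΔA : ℕ} (hdeg : ∀ a : A, G.degree (Sum.inl a) ≤ ΔA) (hcover : CorrCover G H L)
  (hfold : ∀ v : A ⊕ B, (L v).card = ΔA + 1)
  (hperfect : ∀ u v : A ⊕ B, G.Adj u v → ∀ x ∈ L u, ∃ y ∈ L v, H.Adj x y)

def colouring (ω : (B → W) × (A → W)) : A ⊕ B → W := Sum.elim ω.2 ω.1

lemma colouring_mem {ω : (B → W) × (A → W)} (hω : weight G H L ω ≠ 0) (v : A ⊕ B) :
    colouring ω v ∈ L v :=
  match v with
  | .inl a => (mem_sdiff.1 (mem_of_leftWeight_ne_zero (right_ne_zero_of_mul hω) a)).1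
  | .inr b => mem_of_rightWeight_ne_zero (left_ne_zero_of_mul hω) b

include hcover hperfect in
lemma not_adj_of_weight_ne_zero {ω : (B → W) × (A → W)} (hω : weight G H L ω ≠ 0)
    {a : A} {b : B} (hab : G.Adj (.inl a) (.inr b)) : ¬ H.Adj (ω.2 a) (ω.1 b) := by
  intro hadj
  have hd := mem_sdiff.1 (mem_of_leftWeight_ne_zero (right_ne_zero_of_mul hω) a)
  apply hd.2
  rw [eq_partner hperfect hcover hab.symm (mem_of_rightWeight_ne_zero (left_ne_zero_of_mul hω) b)
    hd.1 hadj.symm]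
  exact mem_image_of_mem _ (mem_filter.2 ⟨mem_univ b, hab⟩)

include hcover hperfect in
lemma not_adj_of_mem_image_colouring (hbipA : ∀ a a' : A, ¬ G.Adj (Sum.inl a) (Sum.inl a'))
    (hbipB : ∀ b b' : B, ¬ G.Adj (Sum.inr b) (Sum.inr b'))
    {ω : (B → W) × (A → W)} (hω : weight G H L ω ≠ 0) :
    ∀ x ∈ univ.image (colouring ω), ∀ y ∈ univ.image (colouring ω), ¬ H.Adj x y := by
  rintro _ hx _ hy hxy
  obtain ⟨u, -, rfl⟩ := mem_image.1 hx
  obtain ⟨v, -, rfl⟩ := mem_image.1 hy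
  by_cases huv : G.Adj u v
  · rcases u with a | b <;> rcases v with a' | b'
    · exact hbipA a a' huv
    · exact not_adj_of_weight_ne_zero hcover hperfect hω huv hxy
    · exact not_adj_of_weight_ne_zero hcover hperfect hω huv.symm hxy.symm
    · exact hbipB b b' huv
  · have hne : u ≠ v := by
      rintro rfl
      exact hxy.ne rfl
    exact hcover.nonadj u v hne huv _ (colouring_mem hω u) _ (colouring_mem hω v) hxy

variable [Fintype W] [DecidableEq B]

include hdeg hcover hfold hperfect in
lemma sum_rightWeight_mul_uniformWeight_available {a₀ : A} {x : W} (hx : x ∈ L (.inl a₀)) :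
    ∑ c, rightWeight L c * uniformWeight (available G H L a₀ c) x = ((ΔA : ℝ) + 1)⁻¹ := by
  have hconst : ∀ z ∈ L (.inl a₀),
      ∑ c, rightWeight L c * uniformWeight (available G H L a₀ c) z
        = ∑ c, rightWeight L c * uniformWeight (available G H L a₀ c) x := fun z hz => by
    have := sum_rightWeight_mul_uniformWeight_perm hperfect hcover
      (Equiv.Perm.swap_mem_stabilizer hz hx) z
    rwa [Equiv.swap_apply_left, eq_comm] at this
  have htotal : ∑ z ∈ L (.inl a₀),
      ∑ c, rightWeight L c * uniformWeight (available G H L a₀ c) z = 1 := by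
    rw [sum_comm, ← sum_rightWeight fun b => hfold (.inr b)]
    refine sum_congr rfl fun c _ => ?_
    rw [← mul_sum]
    exact (rightWeight_mul_congr fun hc => sum_uniformWeight_of_subset sdiff_subset
      (available_nonempty hperfect hdeg hfold hc a₀)).trans (mul_one _)
  rw [sum_congr rfl hconst, sum_const, hfold, nsmul_eq_mul] at htotal
  push_cast at htotal
  exact eq_inv_of_mul_eq_one_right htotal

variable [DecidableEq A]

include hdeg hcover hfold hperfect in
lemma sum_weight_of_mem_image_colouring (x : W) :
    ∑ ω with x ∈ univ.image (colouring ω), weight G H L ω = ((ΔA : ℝ) + 1)⁻¹ := by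
  obtain ⟨v, hv, -⟩ := hcover.partition x
  have hmem : ∀ ω, (if x ∈ univ.image (colouring ω) then weight G H L ω else 0)
      = if colouring ω v = x then weight G H L ω else 0 := fun ω => by
    by_cases hω : weight G H L ω = 0
    · simp [hω]
    · exact if_congr (mem_image_iff_apply_eq hcover.partition (colouring_mem hω) hv) rfl rfl
  rw [sum_filter, sum_congr rfl fun ω _ => hmem ω]
  rcases v with a | b
  · rw [← sum_rightWeight_mul_uniformWeight_available hdeg hcover hfold hperfect hv]
    exact sum_weight_of_apply_left_eq hperfect hdeg hfold a x
  · exact sum_weight_of_apply_right_eq hperfect hdeg hfold hv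

end Packing

/-- Bipartite fractional packing: let `G` be bipartite on `A ⊕ B` with every vertex
of `A` of degree at most `ΔA`, and let `(L,H)` be a `(ΔA+1)`-fold correspondence-cover
of `G` whose matchings between lists of adjacent vertices are perfect. Then there is a
probability distribution on independent sets of `H` meeting every list exactly once,
such that every vertex of `H` is covered with probability exactly `1/(ΔA+1)`.
Consequently `χ_f(H) ≤ ΔA + 1`. -/
theorem stmt17 {A B W : Type*} [Fintype A] [Fintype B] [Fintype W]
    [DecidableEq A] [DecidableEq B] [DecidableEq W]
    (G : SimpleGraph (A ⊕ B)) [DecidableRel G.Adj]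
    (hbipA : ∀ a a' : A, ¬ G.Adj (Sum.inl a) (Sum.inl a'))
    (hbipB : ∀ b b' : B, ¬ G.Adj (Sum.inr b) (Sum.inr b'))
    (ΔA : ℕ) (hdeg : ∀ a : A, G.degree (Sum.inl a) ≤ ΔA)
    (H : SimpleGraph W) (L : A ⊕ B → Finset W) (hcover : CorrCover G H L)
    (hfold : ∀ v : A ⊕ B, (L v).card = ΔA + 1)
    (hperfect : ∀ u v : A ⊕ B, G.Adj u v → ∀ x ∈ L u, ∃ y ∈ L v, H.Adj x y) :
    ∃ p : Finset W → ℝ,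
      (∀ S : Finset W, 0 ≤ p S) ∧ (∑ S : Finset W, p S = 1) ∧
      (∀ S : Finset W, 0 < p S →
        (∀ x ∈ S, ∀ y ∈ S, ¬ H.Adj x y) ∧ ∀ v : A ⊕ B, (S ∩ L v).card = 1) ∧
      (∀ x : W, ∑ S ∈ univ.filter (fun S : Finset W => x ∈ S), p S
        = 1 / ((ΔA : ℝ) + 1)) := by
  refine ⟨fun S => ∑ ω with univ.image (colouring ω) = S, weight G H L ω,
    fun S => sum_nonneg fun ω _ => weight_nonneg ω, ?_, ?_, fun x => ?_⟩
  · rw [sum_fiberwise]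
    exact sum_weight hperfect hdeg hfold
  · intro S hS
    obtain ⟨ω, hωS, hω⟩ := exists_ne_zero_of_sum_ne_zero hS.ne'
    rw [← (mem_filter.1 hωS).2]
    refine ⟨not_adj_of_mem_image_colouring hcover hperfect hbipA hbipB hω, fun v => ?_⟩
    rw [image_inter_eq_singleton hcover.partition (colouring_mem hω) v, card_singleton]
  · rw [sum_fiberwise_eq_sum_filter, one_div]
    simpa only [mem_filter, mem_univ, true_and] using
      sum_weight_of_mem_image_colouring hdeg hcover hfold hperfect x
end

section
/- Let n ≥ 2 and consider the rook's graph Kₙ □ Kₙ on vertex set [n]×[n] (two cells adjacent iff they share a row or column) with the list-assignment L given by L((1,i)) = [n+1]\{1} for all i ∈ [n], L((j,1)) = [n+1]\{2} for all 2 ≤ j ≤ n, and L((j,i)) = [n] for all 2 ≤ i,j ≤ n. Then there is no proper L-colouring c with c((1,1)) = n+1. -/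
/-- Adjacency in the rook's graph \`Kₙ □ Kₙ\` on \`Fin n × Fin n\`: distinct cells
sharing a row or a column. -/
def rookAdj (n : ℕ) (u v : Fin n × Fin n) : Prop :=
  u ≠ v ∧ (u.1 = v.1 ∨ u.2 = v.2)

/-- The list-assignment on \`Kₙ □ Kₙ\` (with \`[k] = {1,…,k}\` and index \`0\` playing the
role of \`1\`): \`L((1,i)) = [n+1] \ {1}\`, \`L((j,1)) = [n+1] \ {2}\` for \`j ≥ 2\`, and
\`L((j,i)) = [n]\` otherwise. -/
def rookList (n : ℕ) (v : Fin n × Fin n) : Finset ℕ :=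
  if v.1.val = 0 then (Finset.Icc 1 (n + 1)).erase 1
  else if v.2.val = 0 then (Finset.Icc 1 (n + 1)).erase 2
  else Finset.Icc 1 n

/-!
Count the cells colour by colour. A colour class of a proper colouring of the rook's graph meets
every row and every column at most once, so it has at most `n` cells. Colour `n + 1` can only sit
on the corner, colour `1` is missing from the lists of the first row, and colour `2` from those of
the first column (whose corner is coloured `n + 1`). All lists lie in `[n + 1]`, and `1`, `2`,
`n + 1` are distinct for `n ≥ 2`, so at most `1 + 2 (n - 1) + (n - 2) n = n² - 1` of the `n²`
cells can be coloured.
-/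

open Finset

section RookColouring

variable {n : ℕ} {α : Type*} [DecidableEq α] {c : Fin n × Fin n → α}

theorem card_colourClass_le_of_rows (hc : ∀ u v, rookAdj n u v → c u ≠ c v) {k : α}
    {R : Finset ℕ} (hR : ∀ v, c v = k → (v.1 : ℕ) ∈ R) : #{v | c v = k} ≤ #R := by
  refine card_le_card_of_injOn (fun v => (v.1 : ℕ)) (fun v hv => hR v (mem_filter.1 hv).2) ?_
  intro u hu v hv huv
  by_contra hne
  exact hc u v ⟨hne, Or.inl (Fin.ext huv)⟩ ((mem_filter.1 hu).2.trans (mem_filter.1 hv).2.symm)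

theorem card_colourClass_le_of_cols (hc : ∀ u v, rookAdj n u v → c u ≠ c v) {k : α}
    {C : Finset ℕ} (hC : ∀ v, c v = k → (v.2 : ℕ) ∈ C) : #{v | c v = k} ≤ #C := by
  refine card_le_card_of_injOn (fun v => (v.2 : ℕ)) (fun v hv => hC v (mem_filter.1 hv).2) ?_
  intro u hu v hv huv
  by_contra hne
  exact hc u v ⟨hne, Or.inr (Fin.ext huv)⟩ ((mem_filter.1 hu).2.trans (mem_filter.1 hv).2.symm)

end RookColouring

theorem rookList_subset_Icc (n : ℕ) (v : Fin n × Fin n) : rookList n v ⊆ Icc 1 (n + 1) := by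
  unfold rookList
  split_ifs
  · exact erase_subset _ _
  · exact erase_subset _ _
  · exact Icc_subset_Icc_right (by omega)

theorem sum_Icc_lt_sq_of_le {n : ℕ} (hn : 2 ≤ n) {f : ℕ → ℕ} (hle : ∀ k, f k ≤ n)
    (h1 : f 1 ≤ n - 1) (h2 : f 2 ≤ n - 1) (hlast : f (n + 1) ≤ 1) :
    ∑ k ∈ Icc 1 (n + 1), f k < n * n := by
  have hlast_mem : n + 1 ∈ Icc 1 (n + 1) := mem_Icc.2 ⟨by omega, le_rfl⟩
  have h1_mem : 1 ∈ (Icc 1 (n + 1)).erase (n + 1) :=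
    mem_erase.2 ⟨by omega, mem_Icc.2 ⟨le_rfl, by omega⟩⟩
  have h2_mem : 2 ∈ ((Icc 1 (n + 1)).erase (n + 1)).erase 1 :=
    mem_erase.2 ⟨by omega, mem_erase.2 ⟨by omega, mem_Icc.2 ⟨by omega, by omega⟩⟩⟩
  set rest := (((Icc 1 (n + 1)).erase (n + 1)).erase 1).erase 2
  have hrest : ∑ k ∈ rest, f k ≤ (n - 2) * n := by
    have := sum_le_card_nsmul rest f n fun k _ => hle k
    rwa [card_erase_of_mem h2_mem, card_erase_of_mem h1_mem, card_erase_of_mem hlast_mem,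
      Nat.card_Icc, smul_eq_mul, show n + 1 + 1 - 1 - 1 - 1 - 1 = n - 2 by omega] at this
  rw [← add_sum_erase _ _ hlast_mem, ← add_sum_erase _ _ h1_mem, ← add_sum_erase _ _ h2_mem]
  obtain ⟨m, rfl⟩ : ∃ m, n = m + 2 := ⟨n - 2, by omega⟩
  simp only [Nat.add_sub_cancel, Nat.add_succ_sub_one] at h1 h2 hrest
  nlinarith

section CornerColouring

variable {n : ℕ} {c : Fin n × Fin n → ℕ}

theorem fst_ne_zero_of_colour_eq_one (hlist : ∀ v, c v ∈ rookList n v) {v : Fin n × Fin n}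
    (hv : c v = 1) : (v.1 : ℕ) ≠ 0 := by
  intro h0
  have := hlist v
  simp [rookList, h0, hv] at this

theorem snd_ne_zero_of_colour_eq_two (hn : 2 ≤ n) (hlist : ∀ v, c v ∈ rookList n v)
    (hcorner : ∀ v : Fin n × Fin n, v.1.val = 0 → v.2.val = 0 → c v = n + 1)
    {v : Fin n × Fin n} (hv : c v = 2) : (v.2 : ℕ) ≠ 0 := by
  intro h0
  by_cases h1 : (v.1 : ℕ) = 0
  · have := hcorner v h1 h0
    omega
  · have := hlist v
    simp [rookList, h0, h1, hv] at this

theorem fst_eq_zero_of_colour_eq_succ (hlist : ∀ v, c v ∈ rookList n v)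
    (hc : ∀ u v, rookAdj n u v → c u ≠ c v)
    (hcorner : ∀ v : Fin n × Fin n, v.1.val = 0 → v.2.val = 0 → c v = n + 1)
    {v : Fin n × Fin n} (hv : c v = n + 1) : (v.1 : ℕ) = 0 := by
  by_contra h1
  by_cases h2 : (v.2 : ℕ) = 0
  · let corner : Fin n × Fin n := (⟨0, by omega⟩, v.2)
    refine hc v corner ⟨fun h => h1 (congrArg (fun w => (w.1 : ℕ)) h), Or.inr rfl⟩ ?_
    rw [hv, hcorner corner rfl h2]
  · have := hlist v
    simp [rookList, h1, h2, hv] at this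

end CornerColouring

/-- For `n ≥ 2`, there is no proper `L`-colouring `c` of the rook'\''s graph
`Kₙ □ Kₙ` with the above lists such that the corner cell `(1,1)` gets colour `n+1`. -/
theorem stmt18 (n : ℕ) (hn : 2 ≤ n) :
    ¬ ∃ c : Fin n × Fin n → ℕ,
      (∀ v : Fin n × Fin n, c v ∈ rookList n v) ∧
      (∀ u v : Fin n × Fin n, rookAdj n u v → c u ≠ c v) ∧
      (∀ v : Fin n × Fin n, v.1.val = 0 → v.2.val = 0 → c v = n + 1) := by
  rintro ⟨c, hlist, hc, hcorner⟩
  have hcount : n * n = ∑ k ∈ Icc 1 (n + 1), #{v | c v = k} := by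
    simpa using card_eq_sum_card_fiberwise (s := univ) fun v _ =>
      rookList_subset_Icc n v (hlist v)
  have hle : ∀ k, #{v | c v = k} ≤ n := fun k => by
    simpa using card_colourClass_le_of_rows hc (k := k) (R := range n) fun v _ => by simp
  have h1 : #{v | c v = 1} ≤ n - 1 := by
    simpa using card_colourClass_le_of_rows hc (R := Ioo 0 n) fun v hv =>
      mem_Ioo.2 ⟨Nat.pos_of_ne_zero (fst_ne_zero_of_colour_eq_one hlist hv), v.1.isLt⟩
  have h2 : #{v | c v = 2} ≤ n - 1 := by
    simpa using card_colourClass_le_of_cols hc (C := Ioo 0 n) fun v hv =>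
      mem_Ioo.2
        ⟨Nat.pos_of_ne_zero (snd_ne_zero_of_colour_eq_two hn hlist hcorner hv), v.2.isLt⟩
  have hlast : #{v | c v = n + 1} ≤ 1 := by
    simpa using card_colourClass_le_of_rows hc (R := {0}) fun v hv =>
      mem_singleton.2 (fst_eq_zero_of_colour_eq_succ hlist hc hcorner hv)
  exact (sum_Icc_lt_sq_of_le hn hle h1 h2 hlast).ne' hcount
end

section
/- For every n ≥ 1, the inequality (n−1)² > n(n−2) holds; more generally, for the rook's graph Kₙ □ Kₙ with the list-assignment L described (L((1,i)) = [n+1]\{1}, L((j,1)) = [n+1]\{2} for j ≥ 2, L((j,i)) = [n] otherwise), the graph Kₙ □ Kₙ does not admit an L-packing of size n, so its list packing number strictly exceeds n. -/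
open Finset

/-
Given a packing `c`, the `n` colourings give `(0,0)` the `n` distinct colours of its
list `{2, …, n+1}`, so one of them, `f`, colours `(0,0)` with `n+1`. Every row of `f` then
contains the colour `2`: row `0` uses all of `{2, …, n+1}`, and any other row uses all of `[n]`
because its cell in column `0` shares a column with `(0,0)` and so avoids `n+1`. No cell of
column `0` has colour `2`, so these `n` cells, which lie in distinct columns, fit into the
`n - 1` columns other than `0`, which is impossible.
-/

theorem Function.Injective.exists_eq_of_card_le {ι α : Type*} [Fintype ι] {g : ι → α}
    (hg : Function.Injective g) {S : Finset α} (hmem : ∀ i, g i ∈ S)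
    (hcard : #S ≤ Fintype.card ι) {x : α} (hx : x ∈ S) : ∃ i, g i = x := by
  obtain ⟨i, -, hi⟩ := surj_on_of_inj_on_of_card_le (s := univ) (fun i _ => g i)
    (fun i _ => hmem i) (fun _ _ _ _ h => hg h) (by simpa using hcard) x hx
  exact ⟨i, hi.symm⟩

section rookList

variable {n : ℕ} [NeZero n]

theorem rookList_zero_left (i : Fin n) : rookList n (0, i) = (Icc 1 (n + 1)).erase 1 := by
  simp [rookList]

theorem rookList_zero_right {j : Fin n} (hj : j ≠ 0) :
    rookList n (j, 0) = (Icc 1 (n + 1)).erase 2 := by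
  simp [rookList, hj]

theorem rookList_of_ne_zero {j i : Fin n} (hj : j ≠ 0) (hi : i ≠ 0) :
    rookList n (j, i) = Icc 1 n := by
  simp [rookList, hj, hi]

end rookList

def IsRookListColoring (n : ℕ) (f : Fin n × Fin n → ℕ) : Prop :=
  (∀ v, f v ∈ rookList n v) ∧ ∀ u v, rookAdj n u v → f u ≠ f v

namespace IsRookListColoring

variable {n : ℕ} {f : Fin n × Fin n → ℕ}

theorem injective_row (hf : IsRookListColoring n f) (j : Fin n) :
    Function.Injective fun i => f (j, i) := by
  intro a b hab
  by_contra hne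
  exact hf.2 (j, a) (j, b) ⟨by simpa using hne, Or.inl rfl⟩ hab

variable [NeZero n]

theorem mem_Icc_of_fst_ne_zero (hf : IsRookListColoring n f) (hcorner : f (0, 0) = n + 1)
    {j : Fin n} (hj : j ≠ 0) (i : Fin n) : f (j, i) ∈ Icc 1 n := by
  by_cases hi : i = 0
  · subst hi
    have hmem := hf.1 (j, 0)
    have hne : f (j, 0) ≠ n + 1 :=
      hcorner ▸ hf.2 (j, 0) (0, 0) ⟨by simpa using hj, Or.inr rfl⟩
    rw [rookList_zero_right hj, mem_erase, mem_Icc] at hmem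
    rw [mem_Icc]
    omega
  · simpa [rookList_of_ne_zero hj hi] using hf.1 (j, i)

theorem exists_eq_two (hf : IsRookListColoring n f) (hn : 2 ≤ n) (hcorner : f (0, 0) = n + 1)
    (j : Fin n) : ∃ i, f (j, i) = 2 := by
  by_cases hj : j = 0
  · subst hj
    refine (hf.injective_row 0).exists_eq_of_card_le (S := (Icc 1 (n + 1)).erase 1)
      (fun i => rookList_zero_left i ▸ hf.1 (0, i)) ?_ ?_
    · simp
    · simp only [mem_erase, mem_Icc]; omega
  · exact (hf.injective_row j).exists_eq_of_card_le (hf.mem_Icc_of_fst_ne_zero hcorner hj)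
      (by simp) (by simp only [mem_Icc]; omega)

theorem ne_two_of_snd_eq_zero (hf : IsRookListColoring n f) (hn : 2 ≤ n)
    (hcorner : f (0, 0) = n + 1) (j : Fin n) : f (j, 0) ≠ 2 := by
  by_cases hj : j = 0
  · subst hj
    omega
  · have hmem := hf.1 (j, 0)
    rw [rookList_zero_right hj] at hmem
    exact ne_of_mem_erase hmem

theorem corner_ne (hf : IsRookListColoring n f) (hn : 2 ≤ n) : f (0, 0) ≠ n + 1 := by
  intro hcorner
  choose col hcol using hf.exists_eq_two hn hcorner
  have hcol_inj : Function.Injective col := by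
    intro j j' h
    by_contra hne
    exact hf.2 (j, col j) (j', col j') ⟨fun h => hne (congrArg Prod.fst h), Or.inr h⟩
      ((hcol j).trans (hcol j').symm)
  obtain ⟨j, hj⟩ := Finite.surjective_of_injective hcol_inj 0
  exact hf.ne_two_of_snd_eq_zero hn hcorner j (hj ▸ hcol j)

end IsRookListColoring

theorem exists_corner_eq_of_packing {n : ℕ} [NeZero n] (c : Fin n → Fin n × Fin n → ℕ)
    (hc : ∀ i, IsRookListColoring n (c i)) (hdisj : ∀ i j, i ≠ j → ∀ v, c i v ≠ c j v) :
    ∃ i, c i (0, 0) = n + 1 := by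
  have hinj : Function.Injective fun i => c i (0, 0) := fun i j h => by
    by_contra hne
    exact hdisj i j hne (0, 0) h
  refine hinj.exists_eq_of_card_le (S := (Icc 1 (n + 1)).erase 1)
    (fun i => rookList_zero_left (0 : Fin n) ▸ (hc i).1 (0, 0)) (by simp)
    (by simpa using Nat.pos_of_neZero n)

theorem stmt19_general (n : ℕ) :
    ((n : ℤ) - 1) ^ 2 > (n : ℤ) * ((n : ℤ) - 2) ∧
    (2 ≤ n → ¬ ∃ c : Fin n → (Fin n × Fin n) → ℕ,
      (∀ i : Fin n, (∀ v : Fin n × Fin n, c i v ∈ rookList n v) ∧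
        ∀ u v : Fin n × Fin n, rookAdj n u v → c i u ≠ c i v) ∧
      ∀ i j : Fin n, i ≠ j → ∀ v : Fin n × Fin n, c i v ≠ c j v) := by
  refine ⟨by nlinarith, ?_⟩
  rintro hn ⟨c, hc, hdisj⟩
  have : NeZero n := ⟨by omega⟩
  obtain ⟨i, hi⟩ := exists_corner_eq_of_packing c hc hdisj
  exact IsRookListColoring.corner_ne (hc i) hn hi

/-- For every `n ≥ 1` we have `(n-1)² > n(n-2)`; and (for `n ≥ 2`) the rook'\''s graph
`Kₙ □ Kₙ` with the list-assignment `rookList n` admits no `L`-packing of size `n`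
(`n` pairwise-disjoint proper `L`-colourings), so its list packing number exceeds `n`. -/
theorem stmt19 (n : ℕ) (hn : 1 ≤ n) :
    ((n : ℤ) - 1) ^ 2 > (n : ℤ) * ((n : ℤ) - 2) ∧
    (2 ≤ n → ¬ ∃ c : Fin n → (Fin n × Fin n) → ℕ,
      (∀ i : Fin n, (∀ v : Fin n × Fin n, c i v ∈ rookList n v) ∧
        ∀ u v : Fin n × Fin n, rookAdj n u v → c i u ≠ c i v) ∧
      ∀ i j : Fin n, i ≠ j → ∀ v : Fin n × Fin n, c i v ≠ c j v) :=
  stmt19_general n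
end
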